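/- arXiv:2105.15004 — 9 statements merged into one kernel-verified Lean document; each statement's English description precedes it below -/
import Mathlib

section
/- Let α > 1 and let n > 0 and λ > 0 be real numbers. Then there exists a unique real z > 0 satisfying z = nλ + ∑_{k=1}^∞ (z/n)/(1 + (z/n)·k^α), where the series on the right-hand side converges. -/
open Set

private lemma pnat_rpow_inv_summable {α : ℝ} (hα : 1 < α) :
    Summable (fun k : ℕ+ => ((k : ℝ) ^ α)⁻¹) :=
  (Real.summable_nat_rpow_inv.mpr hα).subtype {n : ℕ | 0 < n}

/-- Basic bounds on a single term. -/
private lemma term_bounds {n z K : ℝ} (hn : 0 < n) (hz : 0 < z) (hK : 0 < K) :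
    0 ≤ (z / n) / (1 + (z / n) * K) ∧ (z / n) / (1 + (z / n) * K) ≤ K⁻¹ := by
  have hc : 0 < z / n := div_pos hz hn
  have hD : 0 < 1 + (z / n) * K := by positivity
  constructor
  · positivity
  · rw [div_le_iff₀ hD, inv_mul_eq_div, le_div_iff₀ hK]
    nlinarith

private lemma term_diff_le_c {c1 c2 K : ℝ} (hc1 : 0 < c1) (h12 : c1 < c2) (hK : 0 < K) :
    c2 / (1 + c2 * K) - c1 / (1 + c1 * K) ≤ (c2 - c1) / c2 * (c2 / (1 + c2 * K)) := by
  have hc2 : 0 < c2 := hc1.trans h12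
  have hD1 : 0 < 1 + c1 * K := by positivity
  have hD2 : 0 < 1 + c2 * K := by positivity
  have hL : c2 / (1 + c2 * K) - c1 / (1 + c1 * K)
      = (c2 - c1) / ((1 + c2 * K) * (1 + c1 * K)) := by
    field_simp; ring
  have hR : (c2 - c1) / c2 * (c2 / (1 + c2 * K)) = (c2 - c1) / (1 + c2 * K) := by
    field_simp
  rw [hL, hR]
  apply div_le_div_of_nonneg_left (sub_nonneg.mpr h12.le) hD2
  nlinarith [mul_pos (mul_pos hc1 hK) hD2]
  
/-- Termwise monotone-difference bound used for uniqueness. -/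
private lemma term_diff_le {n z1 z2 K : ℝ} (hn : 0 < n) (hz1 : 0 < z1) (h12 : z1 < z2)
    (hK : 0 < K) :
    (z2 / n) / (1 + (z2 / n) * K) - (z1 / n) / (1 + (z1 / n) * K)
      ≤ (z2 - z1) / z2 * ((z2 / n) / (1 + (z2 / n) * K)) := by
  have hz2 : 0 < z2 := hz1.trans h12
  have hzz : (z2 - z1) / z2 = (z2 / n - z1 / n) / (z2 / n) := by
    field_simp
  rw [hzz]
  exact term_diff_le_c (div_pos hz1 hn) (by gcongr) hK

/-- For α > 1, n > 0 and λ > 0, there is a unique real z > 0 satisfying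
the self-consistent equation `z = nλ + ∑_{k≥1} (z/n)/(1 + (z/n)k^α)`, the series
being convergent. -/
theorem self_consistent_eq_existence_uniqueness (α n lam : ℝ)
    (hα : 1 < α) (hn : 0 < n) (hlam : 0 < lam) :
    ∃! z : ℝ, 0 < z ∧
      Summable (fun k : ℕ+ => (z / n) / (1 + (z / n) * (k : ℝ) ^ α)) ∧
      z = n * lam + ∑' k : ℕ+, (z / n) / (1 + (z / n) * (k : ℝ) ^ α) := by
  have hsum : Summable (fun k : ℕ+ => ((k : ℝ) ^ α)⁻¹) := pnat_rpow_inv_summable hα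
  have hKpos : ∀ k : ℕ+, (0 : ℝ) < (k : ℝ) ^ α := fun k =>
    Real.rpow_pos_of_pos (by exact_mod_cast k.pos) α
  -- summability of the series for any z > 0
  have hS : ∀ z : ℝ, 0 < z →
      Summable (fun k : ℕ+ => (z / n) / (1 + (z / n) * (k : ℝ) ^ α)) := by
    intro z hz
    refine Summable.of_nonneg_of_le (fun k => (term_bounds hn hz (hKpos k)).1)
      (fun k => (term_bounds hn hz (hKpos k)).2) hsum
  set F : ℝ → ℝ := fun z => ∑' k : ℕ+, (z / n) / (1 + (z / n) * (k : ℝ) ^ α) with hF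
  have hFnonneg : ∀ z : ℝ, 0 < z → 0 ≤ F z := fun z hz =>
    tsum_nonneg fun k => (term_bounds hn hz (hKpos k)).1
  have hFle : ∀ z : ℝ, 0 < z → F z ≤ ∑' k : ℕ+, ((k : ℝ) ^ α)⁻¹ := fun z hz =>
    Summable.tsum_le_tsum (fun k => (term_bounds hn hz (hKpos k)).2) (hS z hz) hsum
  set C : ℝ := ∑' k : ℕ+, ((k : ℝ) ^ α)⁻¹ with hC
  have hCnonneg : 0 ≤ C := tsum_nonneg fun k => (inv_nonneg.mpr (hKpos k).le)
  -- uniqueness-type inequality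
  have key : ∀ z1 z2 : ℝ, 0 < z1 → z1 < z2 →
      z1 = n * lam + F z1 → z2 = n * lam + F z2 → False := by
    intro z1 z2 hz1 h12 he1 he2
    have hz2 : 0 < z2 := hz1.trans h12
    have hdiff : F z2 - F z1
        = ∑' k : ℕ+, ((z2 / n) / (1 + (z2 / n) * (k : ℝ) ^ α)
            - (z1 / n) / (1 + (z1 / n) * (k : ℝ) ^ α)) :=
      (Summable.tsum_sub (hS z2 hz2) (hS z1 hz1)).symm
    have hle : F z2 - F z1 ≤ (z2 - z1) / z2 * F z2 := by
      rw [hdiff, hF]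
      calc ∑' k : ℕ+, ((z2 / n) / (1 + (z2 / n) * (k : ℝ) ^ α)
            - (z1 / n) / (1 + (z1 / n) * (k : ℝ) ^ α))
          ≤ ∑' k : ℕ+, (z2 - z1) / z2 * ((z2 / n) / (1 + (z2 / n) * (k : ℝ) ^ α)) :=
            Summable.tsum_le_tsum (fun k => term_diff_le hn hz1 h12 (hKpos k))
              ((hS z2 hz2).sub (hS z1 hz1)) ((hS z2 hz2).mul_left _)
        _ = (z2 - z1) / z2 * ∑' k : ℕ+, (z2 / n) / (1 + (z2 / n) * (k : ℝ) ^ α) :=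
            tsum_mul_left
    have hFz2 : F z2 = z2 - n * lam := by linarith
    have h1 : z2 - z1 = F z2 - F z1 := by linarith
    have hnl : 0 < n * lam := mul_pos hn hlam
    rw [hFz2] at hle
    have h2 : (z2 - z1) / z2 * (z2 - n * lam) < z2 - z1 := by
      rw [div_mul_eq_mul_div, div_lt_iff₀ hz2]
      nlinarith
    linarith
  -- existence via IVT
  set a : ℝ := n * lam with ha
  set b : ℝ := n * lam + C with hb
  have hapos : 0 < a := mul_pos hn hlam
  have hab : a ≤ b := by simp [hb, ← ha, hCnonneg]
  have hbpos : 0 < b := lt_of_lt_of_le hapos hab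
  have hcont : ContinuousOn (fun z => z - F z) (Icc a b) := by
    refine (continuousOn_id.sub ?_)
    refine continuousOn_tsum (f := fun (k : ℕ+) (z : ℝ) =>
      (z / n) / (1 + (z / n) * (k : ℝ) ^ α)) ?_ hsum ?_
    · intro k
      refine ContinuousOn.div ((continuousOn_id.div_const n)) ?_ ?_
      · exact (continuousOn_const.add ((continuousOn_id.div_const n).mul continuousOn_const))
      · intro z hz
        have hz0 : 0 < z := lt_of_lt_of_le hapos hz.1
        have : 0 < 1 + (z / n) * (k : ℝ) ^ α := by
          have := hKpos k; positivity
        exact this.ne'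
    · intro k z hz
      have hz0 : 0 < z := lt_of_lt_of_le hapos hz.1
      rw [Real.norm_eq_abs, abs_of_nonneg (term_bounds hn hz0 (hKpos k)).1]
      exact (term_bounds hn hz0 (hKpos k)).2
  have hmem : n * lam ∈ Icc ((fun z => z - F z) a) ((fun z => z - F z) b) := by
    constructor
    · simpa [ha] using hFnonneg a hapos
    · have := hFle b hbpos
      simp only [hb]
      linarith
  obtain ⟨z, hzmem, hzeq⟩ := intermediate_value_Icc hab hcont hmem
  have hzpos : 0 < z := lt_of_lt_of_le hapos hzmem.1
  have hzsol : z = n * lam + F z := by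
    have : z - F z = n * lam := hzeq
    linarith
  refine ⟨z, ⟨hzpos, hS z hzpos, hzsol⟩, ?_⟩
  rintro y ⟨hypos, -, hyeq⟩
  rcases lt_trichotomy y z with h | h | h
  · exact absurd (key y z hypos h hyeq hzsol) (fun f => f)
  · exact h
  · exact absurd (key z y hzpos h hzsol hyeq) (fun f => f)
end

section
/- Let α > 1 and let n > 0 be a real number. Then there exists a unique real z > 0 satisfying n = ∑_{k=1}^∞ 1/(1 + (z/n)·k^α), where the series on the right-hand side converges. -/
section Aux

variable {α : ℝ}

private lemma kpos (k : ℕ+) : (0:ℝ) < (k:ℝ) := by exact_mod_cast k.pos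

private lemma kone (k : ℕ+) : (1:ℝ) ≤ (k:ℝ) := by exact_mod_cast k.one_le

private lemma rpow_pos (hα : 1 < α) (k : ℕ+) : (0:ℝ) < (k:ℝ) ^ α :=
  Real.rpow_pos_of_pos (kpos k) α

private lemma denom_pos (hα : 1 < α) {t : ℝ} (ht : 0 < t) (k : ℕ+) :
    0 < 1 + t * (k:ℝ) ^ α := by positivity

/-- summability of the comparison series over ℕ+. -/
private lemma summable_rpow_inv (hα : 1 < α) :
    Summable (fun k : ℕ+ => ((k:ℝ) ^ α)⁻¹) := by
  have h : Summable (fun m : ℕ => 1 / (m:ℝ) ^ α) :=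
    Real.summable_one_div_nat_rpow.mpr hα
  have := h.comp_injective (fun a b h => PNat.coe_injective h : Function.Injective (PNat.val))
  simpa [Function.comp_def, one_div] using this

private lemma term_nonneg (hα : 1 < α) {t : ℝ} (ht : 0 < t) (k : ℕ+) :
    0 ≤ 1 / (1 + t * (k:ℝ) ^ α) :=
  le_of_lt (by positivity)

private lemma term_le (hα : 1 < α) {t : ℝ} (ht : 0 < t) (k : ℕ+) :
    1 / (1 + t * (k:ℝ) ^ α) ≤ t⁻¹ * ((k:ℝ) ^ α)⁻¹ := by
  rw [← mul_inv, one_div]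
  apply inv_anti₀
  · positivity
  · nlinarith [rpow_pos hα k]

private lemma summable_F (hα : 1 < α) {t : ℝ} (ht : 0 < t) :
    Summable (fun k : ℕ+ => 1 / (1 + t * (k:ℝ) ^ α)) := by
  refine Summable.of_nonneg_of_le (term_nonneg hα ht) (term_le hα ht) ?_
  exact (summable_rpow_inv hα).mul_left _

noncomputable def Fsum (α t : ℝ) : ℝ := ∑' k : ℕ+, 1 / (1 + t * (k:ℝ) ^ α)

private lemma F_strict_anti (hα : 1 < α) : StrictAntiOn (Fsum α) (Set.Ioi 0) := by
  intro t₁ ht₁ t₂ ht₂ h12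
  simp only [Set.mem_Ioi] at ht₁ ht₂
  refine Summable.tsum_lt_tsum (i := 1) (fun k => ?_) ?_ (summable_F hα ht₂) (summable_F hα ht₁)
  · apply one_div_le_one_div_of_le (denom_pos hα ht₁ k)
    have := rpow_pos hα k
    nlinarith
  · apply one_div_lt_one_div_of_lt (denom_pos hα ht₁ 1)
    have := rpow_pos hα 1
    nlinarith

private lemma F_continuousOn (hα : 1 < α) {ε : ℝ} (hε : 0 < ε) :
    ContinuousOn (Fsum α) (Set.Ici ε) := by
  apply continuousOn_tsum (u := fun k : ℕ+ => ε⁻¹ * ((k:ℝ) ^ α)⁻¹)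
  · intro k
    apply ContinuousOn.div continuousOn_const
    · exact (continuous_const.add (continuous_id.mul continuous_const)).continuousOn
    · intro t ht
      have : 0 < 1 + t * (k:ℝ) ^ α := denom_pos hα (lt_of_lt_of_le hε ht) k
      exact ne_of_gt this
  · exact (summable_rpow_inv hα).mul_left _
  · intro k t ht
    rw [Real.norm_eq_abs, abs_of_nonneg (term_nonneg hα (lt_of_lt_of_le hε ht) k)]
    calc 1 / (1 + t * (k:ℝ) ^ α) ≤ t⁻¹ * ((k:ℝ) ^ α)⁻¹ :=
          term_le hα (lt_of_lt_of_le hε ht) k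
      _ ≤ ε⁻¹ * ((k:ℝ) ^ α)⁻¹ := by
          have hk := rpow_pos hα k
          exact mul_le_mul_of_nonneg_right (inv_anti₀ hε ht) (le_of_lt (inv_pos.mpr hk))

end Aux

/-- For α > 1 and real n > 0, there is a unique real z > 0 satisfying
the zero-regularization self-consistent equation `n = ∑_{k≥1} 1/(1 + (z/n)k^α)`,
the series being convergent. -/
theorem self_consistent_eq_zero_reg_existence_uniqueness (α n : ℝ)
    (hα : 1 < α) (hn : 0 < n) :
    ∃! z : ℝ, 0 < z ∧
      Summable (fun k : ℕ+ => 1 / (1 + (z / n) * (k : ℝ) ^ α)) ∧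
      n = ∑' k : ℕ+, 1 / (1 + (z / n) * (k : ℝ) ^ α) := by
  -- the comparison sum
  set S : ℝ := ∑' k : ℕ+, ((k:ℝ) ^ α)⁻¹ with hS
  have hSpos : 0 < S := by
    refine Summable.tsum_pos (summable_rpow_inv hα) (fun k => le_of_lt ?_) 1 ?_
    · exact inv_pos.mpr (rpow_pos hα k)
    · exact inv_pos.mpr (rpow_pos hα 1)
  -- upper endpoint b : Fsum α b < n
  set b : ℝ := 2 * S / n with hbdef
  have hb : 0 < b := by positivity
  have hFb : Fsum α b < n := by
    have h1 : Fsum α b ≤ b⁻¹ * S := by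
      have := Summable.tsum_le_tsum (term_le hα hb) (summable_F hα hb)
        ((summable_rpow_inv hα).mul_left b⁻¹)
      simpa [Fsum, tsum_mul_left, hS] using this
    have h2 : b⁻¹ * S = n / 2 := by
      rw [hbdef]
      field_simp
    rw [h2] at h1
    linarith
  -- lower endpoint a : n ≤ Fsum α a
  set N : ℕ := ⌈n⌉₊ + 1 with hNdef
  have hNn : n < (N:ℕ) := by
    have := Nat.le_ceil n
    push_cast [hNdef]
    linarith
  have hNpos : (0:ℝ) < (N:ℝ) := lt_trans hn hNn
  have hNrpow : (0:ℝ) < (N:ℝ) ^ α := Real.rpow_pos_of_pos hNpos α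
  set a : ℝ := ((N:ℝ) / n - 1) / (N:ℝ) ^ α with hadef
  have ha : 0 < a := by
    apply div_pos _ hNrpow
    have : 1 < (N:ℝ) / n := (one_lt_div hn).mpr hNn
    linarith
  have hkey : 1 + a * (N:ℝ) ^ α = (N:ℝ) / n := by
    rw [hadef]
    field_simp
    ring
  have hFa : n ≤ Fsum α a := by
    set s : Finset ℕ+ := (Finset.range N).map
      ⟨fun i => ⟨i + 1, Nat.succ_pos i⟩, fun i j hij => by
        have := congrArg (fun p : ℕ+ => (p:ℕ)) hij
        simpa using this⟩ with hsdef
    have hsum_le : ∑ k ∈ s, 1 / (1 + a * (k:ℝ) ^ α) ≤ Fsum α a :=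
      Summable.sum_le_tsum s (fun k _ => term_nonneg hα ha k) (summable_F hα ha)
    have hterm : ∀ i ∈ Finset.range N, n / (N:ℝ) ≤ 1 / (1 + a * ((i+1:ℕ):ℝ) ^ α) := by
      intro i hi
      have hiN : (i + 1 : ℕ) ≤ N := Finset.mem_range.mp hi
      have hle : ((i+1:ℕ):ℝ) ^ α ≤ (N:ℝ) ^ α := by
        apply Real.rpow_le_rpow (by positivity) (by exact_mod_cast hiN) (by linarith)
      have hd : 0 < 1 + a * ((i+1:ℕ):ℝ) ^ α := by positivity
      have hdle : 1 + a * ((i+1:ℕ):ℝ) ^ α ≤ (N:ℝ) / n := by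
        rw [← hkey]; nlinarith
      calc n / (N:ℝ) = ((N:ℝ) / n)⁻¹ := by rw [inv_div]
        _ ≤ (1 + a * ((i+1:ℕ):ℝ) ^ α)⁻¹ := by
            apply inv_anti₀ hd hdle
        _ = 1 / (1 + a * ((i+1:ℕ):ℝ) ^ α) := (one_div _).symm
    have hsum_ge : n ≤ ∑ k ∈ s, 1 / (1 + a * (k:ℝ) ^ α) := by
      rw [hsdef, Finset.sum_map]
      have := Finset.card_nsmul_le_sum (Finset.range N)
        (fun i => 1 / (1 + a * ((i+1:ℕ):ℝ) ^ α)) (n / (N:ℝ)) hterm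
      simp only [Finset.card_range, nsmul_eq_mul] at this
      calc n = (N:ℝ) * (n / (N:ℝ)) := by field_simp
        _ ≤ ∑ i ∈ Finset.range N, 1 / (1 + a * ((i+1:ℕ):ℝ) ^ α) := this
        _ = _ := by
            apply Finset.sum_congr rfl
            intro i _
            rfl
    exact le_trans hsum_ge hsum_le
  -- a < b
  have hab : a < b := by
    by_contra h
    push_neg at h
    rcases eq_or_lt_of_le h with h | h
    · rw [← h] at hFa; linarith
    · have := F_strict_anti hα (Set.mem_Ioi.mpr hb) (Set.mem_Ioi.mpr ha) h
      linarith
  -- IVT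
  have hcont : ContinuousOn (Fsum α) (Set.Icc a b) :=
    (F_continuousOn hα ha).mono (fun x hx => hx.1)
  have hmem : n ∈ Set.Icc (Fsum α b) (Fsum α a) := ⟨le_of_lt hFb, hFa⟩
  obtain ⟨t, htI, htF⟩ := intermediate_value_Icc' (le_of_lt hab) hcont hmem
  have ht : 0 < t := lt_of_lt_of_le ha htI.1
  refine ⟨n * t, ⟨by positivity, ?_, ?_⟩, ?_⟩
  · rw [mul_div_cancel_left₀ t (ne_of_gt hn)]
    exact summable_F hα ht
  · rw [mul_div_cancel_left₀ t (ne_of_gt hn)]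
    exact htF.symm
  · rintro z' ⟨hz', hsum', heq'⟩
    have ht' : 0 < z' / n := div_pos hz' hn
    have : z' / n = t := by
      apply (F_strict_anti hα).injOn (Set.mem_Ioi.mpr ht') (Set.mem_Ioi.mpr ht)
      rw [htF]
      exact heq'.symm
    have := congrArg (fun x => n * x) this
    simpa [mul_div_cancel₀, ne_of_gt hn, mul_comm] using this
end

section
/- Let α > 1 and for each real n > 0 let z_n denote the unique positive real satisfying n = ∑_{k=1}^∞ 1/(1 + (z_n/n)·k^α). Then n^{α−1}·z_n converges to (∫_0^∞ dx/(1+x^α))^α as n → ∞. -/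
open MeasureTheory Filter Set Real
open scoped ENNReal Topology

section Aux
variable {α : ℝ} (hα : 1 < α)

lemma aux_integrable (hα : 1 < α) :
    IntegrableOn (fun x : ℝ => 1 / (1 + x ^ α)) (Ioi (0:ℝ)) := by
  have hcont : ContinuousOn (fun x : ℝ => 1 / (1 + x ^ α)) (Icc (0:ℝ) 1) := by
    apply ContinuousOn.div continuousOn_const
    · exact (continuousOn_const.add ((Real.continuous_rpow_const (by linarith)).continuousOn))
    · intro x hx
      have : (0:ℝ) ≤ x ^ α := Real.rpow_nonneg hx.1 α
      positivity
  have h1 : IntegrableOn (fun x : ℝ => 1 / (1 + x ^ α)) (Ioc (0:ℝ) 1) :=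
    (hcont.integrableOn_compact isCompact_Icc).mono_set Ioc_subset_Icc_self
  have h2 : IntegrableOn (fun x : ℝ => 1 / (1 + x ^ α)) (Ioi (1:ℝ)) := by
    have hmeas : AEStronglyMeasurable (fun x : ℝ => 1 / (1 + x ^ α))
        (volume.restrict (Ioi (1:ℝ))) := by
      apply Measurable.aestronglyMeasurable
      exact (measurable_const.div ((measurable_const.add
        ((Real.continuous_rpow_const (by linarith)).measurable))))
    refine (integrableOn_Ioi_rpow_of_lt (by linarith : -α < -1) one_pos).mono' hmeas ?_
    filter_upwards [ae_restrict_mem measurableSet_Ioi] with x hx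
    have hx1 : (1:ℝ) < x := hx
    have hxpos : (0:ℝ) < x := by linarith
    have hpow : (0:ℝ) < x ^ α := Real.rpow_pos_of_pos hxpos α
    rw [Real.norm_eq_abs, abs_of_nonneg (by positivity)]
    rw [Real.rpow_neg hxpos.le, ← one_div]
    apply one_div_le_one_div_of_le hpow
    linarith
  have : Ioi (0:ℝ) = Ioc 0 1 ∪ Ioi 1 := (Ioc_union_Ioi_eq_Ioi zero_le_one).symm
  rw [this]
  exact h1.union h2

lemma aux_Ipos (hα : 1 < α) : 0 < ∫ x in Ioi (0:ℝ), 1 / (1 + x ^ α) := by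
  have h := aux_integrable hα
  rw [setIntegral_pos_iff_support_of_nonneg_ae ?_ h]
  · have : Ioi (0:ℝ) ⊆ Function.support (fun x : ℝ => 1 / (1 + x ^ α)) ∪ Iic 0 := by
      intro x hx
      left
      have : (0:ℝ) < x ^ α := Real.rpow_pos_of_pos hx α
      simp only [Function.mem_support]
      positivity
    have hsub : Ioi (0:ℝ) ∩ Ioi 0 ⊆ Function.support (fun x : ℝ => 1 / (1 + x ^ α)) ∩ Ioi 0 := by
      intro x hx
      refine ⟨?_, hx.1⟩
      have : (0:ℝ) < x ^ α := Real.rpow_pos_of_pos hx.1 α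
      simp only [Function.mem_support]
      positivity
    calc (0:ℝ≥0∞) < volume (Ioi (0:ℝ) ∩ Ioi 0) := by simp
      _ ≤ volume (Function.support (fun x : ℝ => 1 / (1 + x ^ α)) ∩ Ioi 0) :=
        measure_mono hsub
  · filter_upwards [ae_restrict_mem measurableSet_Ioi] with x hx
    have : (0:ℝ) < x ^ α := Real.rpow_pos_of_pos hx α
    positivity
end Aux

section Key
variable {α : ℝ}

lemma aux_key (hα : 1 < α) {c : ℝ} (hc : 0 < c) :
    (∑' k : ℕ+, 1 / (1 + c * (k:ℝ) ^ α)) ≤ (∫ x in Ioi (0:ℝ), 1 / (1 + x ^ α)) / c ^ α⁻¹ ∧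
    (∫ x in Ioi (0:ℝ), 1 / (1 + x ^ α)) / c ^ α⁻¹
      ≤ (∑' k : ℕ+, 1 / (1 + c * (k:ℝ) ^ α)) + 1 := by
  have hα0 : (0:ℝ) < α := by linarith
  set t : ℝ := c ^ α⁻¹ with ht_def
  have ht : 0 < t := Real.rpow_pos_of_pos hc _
  have htα : t ^ α = c := Real.rpow_inv_rpow hc.le (by positivity)
  set h : ℝ → ℝ := fun x => 1 / (1 + (t * x) ^ α) with hh_def
  -- identity on nonneg reals
  have hkey : ∀ x : ℝ, 0 ≤ x → h x = 1 / (1 + c * x ^ α) := by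
    intro x hx
    simp only [hh_def]
    rw [Real.mul_rpow ht.le hx, htα]
  have hnonneg : ∀ x : ℝ, 0 ≤ x → 0 ≤ h x := by
    intro x hx
    have : (0:ℝ) ≤ (t * x) ^ α := Real.rpow_nonneg (by positivity) α
    simp only [hh_def]; positivity
  have hanti : AntitoneOn h (Ici (0:ℝ)) := by
    intro x hx y hy hxy
    have hx' : (0:ℝ) ≤ x := hx
    simp only [hh_def]
    have h1 : (0:ℝ) ≤ (t * x) ^ α := Real.rpow_nonneg (mul_nonneg ht.le hx') α
    apply one_div_le_one_div_of_le (by linarith)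
    have : (t * x) ^ α ≤ (t * y) ^ α :=
      Real.rpow_le_rpow (mul_nonneg ht.le hx') (by nlinarith) hα0.le
    linarith
  have hint : IntegrableOn h (Ioi (0:ℝ)) := by
    have := (integrableOn_Ioi_comp_mul_left_iff (fun x : ℝ => 1 / (1 + x ^ α)) 0 ht).mpr
      (by rw [mul_zero]; exact aux_integrable hα)
    exact this
  have hIval : (∫ x in Ioi (0:ℝ), 1 / (1 + x ^ α)) / t = ∫ x in Ioi (0:ℝ), h x := by
    have := integral_comp_mul_left_Ioi (fun x : ℝ => 1 / (1 + x ^ α)) 0 ht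
    rw [mul_zero] at this
    rw [hh_def]
    rw [this, smul_eq_mul, div_eq_inv_mul]
  -- summability
  have hsum : Summable (fun k : ℕ => h ((k:ℝ) + 1)) := by
    have hS : Summable (fun k : ℕ => 1 / ((k:ℝ)+1) ^ α) := by
      have := (summable_nat_add_iff (f := fun n : ℕ => 1 / (n:ℝ) ^ α) 1).mpr
        (Real.summable_one_div_nat_rpow.mpr hα)
      simpa using this
    refine Summable.of_nonneg_of_le (fun k => hnonneg _ (by positivity)) (fun k => ?_)
      (hS.mul_left c⁻¹)
    rw [hkey _ (by positivity)]
    have hp : (0:ℝ) < ((k:ℝ)+1) ^ α := Real.rpow_pos_of_pos (by positivity) α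
    calc 1 / (1 + c * ((k:ℝ)+1) ^ α) ≤ 1 / (c * ((k:ℝ)+1) ^ α) :=
          one_div_le_one_div_of_le (by positivity) (by linarith)
      _ = c⁻¹ * (1 / ((k:ℝ)+1) ^ α) := by field_simp
  -- rewrite tsum over ℕ+ as tsum over ℕ
  have htsum : (∑' k : ℕ+, 1 / (1 + c * (k:ℝ) ^ α)) = ∑' k : ℕ, h ((k:ℝ) + 1) := by
    rw [← Equiv.pnatEquivNat.symm.tsum_eq (fun k : ℕ+ => 1 / (1 + c * (k:ℝ) ^ α))]
    congr 1
    funext k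
    rw [hkey _ (by positivity)]
    norm_num [Equiv.pnatEquivNat, Nat.succPNat]
  -- partial sums vs integrals
  have hpartial_le : ∀ m : ℕ, (∑ i ∈ Finset.range m, h ((i:ℝ) + 1))
      ≤ ∫ x in Ioi (0:ℝ), h x := by
    intro m
    have hAnti : AntitoneOn h (Icc (0:ℝ) (0 + m)) := hanti.mono (by
      intro x hx; exact hx.1)
    have h1 := hAnti.sum_le_integral
    simp only [zero_add] at h1
    refine le_trans (le_of_eq ?_) (h1.trans ?_)
    · apply Finset.sum_congr rfl; intro i _; push_cast; ring_nf
    · rw [intervalIntegral.integral_of_le (by positivity)]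
      exact setIntegral_mono_set hint
        (by filter_upwards [ae_restrict_mem measurableSet_Ioi] with x hx
            exact hnonneg x (le_of_lt hx))
        (HasSubset.Subset.eventuallyLE Ioc_subset_Ioi_self)
  have hintegral_le : ∀ m : ℕ, (∫ x in (0:ℝ)..(m:ℝ), h x)
      ≤ (∑' k : ℕ, h ((k:ℝ) + 1)) + 1 := by
    intro m
    have hAnti : AntitoneOn h (Icc (0:ℝ) (0 + m)) := hanti.mono (by
      intro x hx; exact hx.1)
    have h1 := hAnti.integral_le_sum
    simp only [zero_add] at h1
    refine h1.trans ?_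
    cases m with
    | zero =>
      have h0 : (0:ℝ) ≤ ∑' k : ℕ, h ((k:ℝ) + 1) :=
        tsum_nonneg (fun k => hnonneg _ (by positivity))
      simp only [Finset.range_zero, Finset.sum_empty]
      linarith
    | succ m' =>
      rw [Finset.sum_range_succ']
      have h0 : h ((0:ℕ):ℝ) = 1 := by
        simp only [hh_def, Nat.cast_zero, mul_zero, Real.zero_rpow (by positivity : α ≠ 0)]
        norm_num
      rw [h0]
      gcongr
      have := Summable.sum_le_tsum (Finset.range m') (fun i _ => hnonneg ((i:ℝ)+1) (by positivity)) hsum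
      refine le_trans (le_of_eq ?_) this
      apply Finset.sum_congr rfl; intro i _; push_cast; ring_nf
  have hlim : Tendsto (fun m : ℕ => ∫ x in (0:ℝ)..(m:ℝ), h x) atTop
      (𝓝 (∫ x in Ioi (0:ℝ), h x)) :=
    intervalIntegral_tendsto_integral_Ioi 0 hint tendsto_natCast_atTop_atTop
  constructor
  · rw [htsum, hIval]
    exact Real.tsum_le_of_sum_range_le (fun k => hnonneg _ (by positivity)) hpartial_le
  · rw [htsum, hIval]
    exact le_of_tendsto hlim (Eventually.of_forall hintegral_le)
end Key

/-- For α > 1, if for every n > 0, `z n` is the (unique) positive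
solution of `n = ∑_{k≥1} 1/(1+(z n/n)k^α)`, then `n^{α-1}·z n → (∫_0^∞ dx/(1+x^α))^α`
as `n → ∞`. -/
theorem scaling_z_no_regularization (α : ℝ) (hα : 1 < α) (z : ℝ → ℝ)
    (hz : ∀ n : ℝ, 0 < n →
      0 < z n ∧ n = ∑' k : ℕ+, 1 / (1 + (z n / n) * (k : ℝ) ^ α)) :
    Filter.Tendsto (fun n : ℝ => n ^ (α - 1) * z n) Filter.atTop
      (nhds ((∫ x in Set.Ioi (0 : ℝ), 1 / (1 + x ^ α)) ^ α)) := by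
  have hα0 : (0:ℝ) < α := by linarith
  set I : ℝ := ∫ x in Set.Ioi (0 : ℝ), 1 / (1 + x ^ α) with hI_def
  have hIpos : 0 < I := aux_Ipos hα
  set t : ℝ → ℝ := fun n => (z n / n) ^ α⁻¹ with ht_def
  have htpos : ∀ n : ℝ, 0 < n → 0 < t n := fun n hn =>
    Real.rpow_pos_of_pos (div_pos (hz n hn).1 hn) _
  have hbounds : ∀ n : ℝ, 0 < n → I * (n / (n+1)) ≤ n * t n ∧ n * t n ≤ I := by
    intro n hn
    have hc : 0 < z n / n := div_pos (hz n hn).1 hn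
    have hkey := aux_key hα hc
    rw [← (hz n hn).2] at hkey
    have ht := htpos n hn
    constructor
    · have h2 : I / t n ≤ n + 1 := hkey.2
      have h3 : I ≤ (n + 1) * t n := by
        rw [div_le_iff₀ ht] at h2; linarith [h2]
      rw [mul_comm I, div_mul_eq_mul_div, div_le_iff₀ (by linarith : (0:ℝ) < n+1)]
      nlinarith
    · have h1 : n ≤ I / t n := hkey.1
      rw [le_div_iff₀ ht] at h1
      linarith
  -- squeeze
  have hlow : Tendsto (fun n : ℝ => I * (n / (n+1))) atTop (𝓝 I) := by
    have h1 : Tendsto (fun n : ℝ => (n+1)⁻¹) atTop (𝓝 0) :=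
      tendsto_inv_atTop_zero.comp (tendsto_atTop_add_const_right _ 1 tendsto_id)
    have h2 : Tendsto (fun n : ℝ => I * (1 - (n+1)⁻¹)) atTop (𝓝 I) := by
      have := (((tendsto_const_nhds : Tendsto (fun _ : ℝ => (1:ℝ)) atTop (𝓝 1)).sub
        h1).const_mul I)
      simpa using this
    refine h2.congr' ?_
    filter_upwards [eventually_gt_atTop (0:ℝ)] with n hn
    have : n + 1 ≠ 0 := by linarith
    field_simp
    ring
  have hsqueeze : Tendsto (fun n : ℝ => n * t n) atTop (𝓝 I) := by
    refine tendsto_of_tendsto_of_tendsto_of_le_of_le' hlow tendsto_const_nhds ?_ ?_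
    · filter_upwards [eventually_gt_atTop (0:ℝ)] with n hn
      exact (hbounds n hn).1
    · filter_upwards [eventually_gt_atTop (0:ℝ)] with n hn
      exact (hbounds n hn).2
  have htend : Tendsto (fun n : ℝ => (n * t n) ^ α) atTop (𝓝 (I ^ α)) :=
    hsqueeze.rpow_const (Or.inl hIpos.ne')
  refine htend.congr' ?_
  filter_upwards [eventually_gt_atTop (0:ℝ)] with n hn
  have hzn := (hz n hn).1
  have hc : (0:ℝ) ≤ z n / n := (div_pos hzn hn).le
  have h1 : (n * t n) ^ α = n ^ α * (t n) ^ α :=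
    Real.mul_rpow hn.le (Real.rpow_nonneg hc _)
  have h2 : (t n) ^ α = z n / n := Real.rpow_inv_rpow hc (by positivity)
  have h3 : n ^ α = n ^ (α - 1) * n := by
    rw [← Real.rpow_add_one hn.ne']
    norm_num
  rw [h1, h2, h3]
  field_simp
end

section
/- Let α > 1 and 0 ≤ ℓ < α. For each real n > 1 let z_n denote the unique positive real satisfying z_n = n^{1−ℓ} + ∑_{k=1}^∞ (z_n/n)/(1 + (z_n/n)·k^α). Then z_n/n^{1−ℓ} converges to 1 as n → ∞. -/
open Real Filter

private lemma aux_rpow_le_one_add {x θ : ℝ} (hx : 0 ≤ x) (hθ0 : 0 ≤ θ) (hθ1 : θ ≤ 1) :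
    x ^ θ ≤ 1 + x := by
  rcases le_or_gt x 1 with h | h
  · calc x ^ θ ≤ 1 := Real.rpow_le_one hx h hθ0
    _ ≤ 1 + x := by linarith
  · calc x ^ θ ≤ x ^ (1:ℝ) := Real.rpow_le_rpow_of_exponent_le h.le hθ1
    _ = x := Real.rpow_one x
    _ ≤ 1 + x := by linarith

set_option maxHeartbeats 2000000 in
/-- For α > 1 and 0 ≤ ℓ < α, if for every n > 1, `z n` is the (unique)
positive solution of `z = n^{1-ℓ} + ∑_{k≥1} (z/n)/(1+(z/n)k^α)`, then
`z n / n^{1-ℓ} → 1` as `n → ∞` (effectively regularized regime: z ≈ nλ = n^{1-ℓ}). -/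
theorem scaling_z_regularized_regime (α ℓ : ℝ) (hα : 1 < α)
    (hℓ0 : 0 ≤ ℓ) (hℓα : ℓ < α) (z : ℝ → ℝ)
    (hz : ∀ n : ℝ, 1 < n → 0 < z n ∧
      z n = n ^ (1 - ℓ) + ∑' k : ℕ+, (z n / n) / (1 + (z n / n) * (k : ℝ) ^ α)) :
    Filter.Tendsto (fun n : ℝ => z n / n ^ (1 - ℓ)) Filter.atTop (nhds 1) := by
  set m : ℝ := max ℓ 1 with hm
  have hm1 : (1:ℝ) ≤ m := le_max_right _ _
  have hm0 : (0:ℝ) < m := lt_of_lt_of_le one_pos hm1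
  have hmα : m < α := max_lt hℓα hα
  set θ : ℝ := (α⁻¹ + m⁻¹) / 2 with hθ
  have hα0 : (0:ℝ) < α := lt_trans one_pos hα
  have hθ0 : (0:ℝ) < θ := by positivity
  have hinv : α⁻¹ < m⁻¹ := by
    exact inv_strictAnti₀ hm0 hmα
  have hθm : θ < m⁻¹ := by
    rw [hθ]; linarith
  have hθα : α⁻¹ < θ := by
    rw [hθ]; linarith
  have hθ1 : θ ≤ 1 := le_trans hθm.le (inv_le_one_of_one_le₀ hm1)
  have hαθ : 1 < α * θ := by
    have h := mul_lt_mul_of_pos_left hθα hα0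
    rwa [mul_inv_cancel₀ hα0.ne'] at h
  have hmθ : m < θ⁻¹ := by
    have := inv_strictAnti₀ hθ0 hθm
    simpa using this
  have hℓθinv : ℓ ≤ θ⁻¹ := le_trans (le_max_left _ _) hmθ.le
  have hℓθ : ℓ * θ < 1 := by
    have h1 : ℓ * θ ≤ m * θ := by nlinarith [le_max_left ℓ 1]
    have h2 : m * θ < m * m⁻¹ := by nlinarith
    rw [mul_inv_cancel₀ hm0.ne'] at h2
    linarith
  -- summability of k ^ (-(α*θ)) over ℕ+
  have hsumN : Summable (fun n : ℕ => (n:ℝ) ^ (-(α*θ))) :=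
    Real.summable_nat_rpow.mpr (by linarith)
  have hsum : Summable (fun k : ℕ+ => (k:ℝ) ^ (-(α*θ))) := by
    have := hsumN.comp_injective PNat.coe_injective
    exact this
  set Z : ℝ := ∑' k : ℕ+, (k:ℝ) ^ (-(α*θ)) with hZ
  have hZ0 : 0 ≤ Z := tsum_nonneg fun k => Real.rpow_nonneg (by positivity) _
  set C : ℝ := (2*Z) ^ θ⁻¹ with hC
  have hC0 : 0 ≤ C := Real.rpow_nonneg (by linarith) _
  set K : ℝ := Z * (2 + C) ^ (1 - θ) with hK
  have hK0 : 0 ≤ K := mul_nonneg hZ0 (Real.rpow_nonneg (by linarith) _)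
  -- main pointwise bounds
  have key : ∀ n : ℝ, 1 < n → 1 ≤ z n / n ^ (1-ℓ) ∧
      z n / n ^ (1-ℓ) ≤ 1 + K * n ^ (ℓ*θ - 1) := by
    intro n hn
    obtain ⟨hzpos, heq⟩ := hz n hn
    have hn0 : (0:ℝ) < n := lt_trans one_pos hn
    have hn1 : (1:ℝ) ≤ n := hn.le
    set q : ℝ := z n / n with hqdef
    have hq0 : 0 < q := div_pos hzpos hn0
    have hnl : 0 < n ^ (1-ℓ) := Real.rpow_pos_of_pos hn0 _
    -- term bounds
    have hterm_nonneg : ∀ k : ℕ+, 0 ≤ q / (1 + q * (k:ℝ)^α) := by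
      intro k
      have hk1 : (1:ℝ) ≤ (k:ℝ) := by exact_mod_cast k.one_le
      have hka : 0 < (k:ℝ)^α := Real.rpow_pos_of_pos (by linarith) _
      positivity
    have hterm_le : ∀ k : ℕ+, q / (1 + q * (k:ℝ)^α) ≤ q ^ (1-θ) * (k:ℝ) ^ (-(α*θ)) := by
      intro k
      have hk1 : (1:ℝ) ≤ (k:ℝ) := by exact_mod_cast k.one_le
      have hk0 : (0:ℝ) < (k:ℝ) := by linarith
      have hka : 0 < (k:ℝ)^α := Real.rpow_pos_of_pos hk0 _
      set x : ℝ := q * (k:ℝ)^α with hx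
      have hx0 : 0 < x := mul_pos hq0 hka
      have hxθ : 0 < x ^ θ := Real.rpow_pos_of_pos hx0 _
      have h1 : x ^ θ ≤ 1 + x := aux_rpow_le_one_add hx0.le hθ0.le hθ1
      have h2 : q / (1 + x) ≤ q / x ^ θ := by
        apply div_le_div_of_nonneg_left hq0.le hxθ h1
      have h3 : q / x ^ θ = q ^ (1-θ) * (k:ℝ) ^ (-(α*θ)) := by
        have hqθ : (0:ℝ) < q ^ θ := Real.rpow_pos_of_pos hq0 _
        have hkA : (0:ℝ) < (k:ℝ) ^ (α*θ) := Real.rpow_pos_of_pos hk0 _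
        rw [hx, Real.mul_rpow hq0.le hka.le, ← Real.rpow_mul hk0.le α θ,
          Real.rpow_neg hk0.le, Real.rpow_sub hq0, Real.rpow_one]
        field_simp
      rw [← h3]; exact h2
    set S : ℝ := ∑' k : ℕ+, q / (1 + q * (k:ℝ)^α) with hS
    have hsum2 : Summable (fun k : ℕ+ => q ^ (1-θ) * (k:ℝ) ^ (-(α*θ))) := hsum.mul_left _
    have hterm_summ : Summable (fun k : ℕ+ => q / (1 + q * (k:ℝ)^α)) :=
      Summable.of_nonneg_of_le hterm_nonneg hterm_le hsum2
    have hS_le : S ≤ q ^ (1-θ) * Z := by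
      rw [hS, hZ]
      calc (∑' k : ℕ+, q / (1 + q * (k:ℝ)^α))
          ≤ ∑' k : ℕ+, q ^ (1-θ) * (k:ℝ) ^ (-(α*θ)) :=
            Summable.tsum_le_tsum hterm_le hterm_summ hsum2
        _ = q ^ (1-θ) * ∑' k : ℕ+, (k:ℝ) ^ (-(α*θ)) := tsum_mul_left
    have hS0 : 0 ≤ S := tsum_nonneg hterm_nonneg
    have heq' : z n = n ^ (1-ℓ) + S := heq
    -- lower bound
    have hlow : 1 ≤ z n / n ^ (1-ℓ) := by
      rw [le_div_iff₀ hnl, one_mul, heq']; linarith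
    refine ⟨hlow, ?_⟩
    -- upper bound on z n
    have hzB : z n ≤ 2 * n ^ (1-ℓ) + C * n ^ (1 - θ⁻¹) := by
      have hnt : 0 < n ^ (1 - θ⁻¹) := Real.rpow_pos_of_pos hn0 _
      rcases le_or_gt (q ^ (1-θ) * Z) (n ^ (1-ℓ)) with h | h
      · rw [heq']; linarith [hS_le, mul_nonneg hC0 hnt.le]
      · have hZpos : 0 < Z := by
          by_contra hc
          push_neg at hc
          have : q ^ (1-θ) * Z ≤ 0 :=
            mul_nonpos_of_nonneg_of_nonpos (Real.rpow_nonneg hq0.le _) hc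
          linarith
        have hz2 : z n ≤ 2 * Z * (z n ^ (1-θ) / n ^ (1-θ)) := by
          have hqr : q ^ (1-θ) = z n ^ (1-θ) / n ^ (1-θ) := by
            rw [hqdef, Real.div_rpow hzpos.le hn0.le]
          rw [← hqr]
          calc z n = n ^ (1-ℓ) + S := heq'
            _ ≤ q ^ (1-θ) * Z + q ^ (1-θ) * Z := by linarith
            _ = 2 * Z * q ^ (1-θ) := by ring
        have hzθle : z n ^ θ ≤ 2 * Z * n ^ (θ - 1) := by
          have hz1θ : 0 < z n ^ (1-θ) := Real.rpow_pos_of_pos hzpos _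
          have e1 : n ^ (θ-1) = (n ^ (1-θ))⁻¹ := by
            rw [← Real.rpow_neg hn0.le]; ring_nf
          have e2 : z n ^ θ = z n / z n ^ (1-θ) := by
            conv_lhs => rw [show θ = 1 - (1-θ) by ring]
            rw [Real.rpow_sub hzpos, Real.rpow_one]
          rw [e2, div_le_iff₀ hz1θ, e1]
          calc z n ≤ 2 * Z * (z n ^ (1-θ) / n ^ (1-θ)) := hz2
            _ = 2 * Z * (n ^ (1-θ))⁻¹ * z n ^ (1-θ) := by ring
        have hfinal : z n ≤ C * n ^ (1 - θ⁻¹) := by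
          have h2Z : (0:ℝ) < 2 * Z := by linarith
          have hnθ1 : 0 < n ^ (θ-1) := Real.rpow_pos_of_pos hn0 _
          have step : z n = (z n ^ θ) ^ θ⁻¹ := by
            rw [← Real.rpow_mul hzpos.le, mul_inv_cancel₀ hθ0.ne', Real.rpow_one]
          rw [step]
          calc (z n ^ θ) ^ θ⁻¹ ≤ (2 * Z * n ^ (θ-1)) ^ θ⁻¹ :=
              Real.rpow_le_rpow (Real.rpow_nonneg hzpos.le _) hzθle (by positivity)
            _ = (2*Z) ^ θ⁻¹ * (n ^ (θ-1)) ^ θ⁻¹ :=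
              Real.mul_rpow h2Z.le hnθ1.le
            _ = C * n ^ (1 - θ⁻¹) := by
              rw [hC, ← Real.rpow_mul hn0.le]
              congr 1
              field_simp
        linarith [hfinal, hnl]
    -- bound on q
    have hqB : q ≤ (2 + C) * n ^ (-ℓ) := by
      have e1 : n ^ (1-ℓ) / n = n ^ (-ℓ) := by
        have h := Real.rpow_sub hn0 (1-ℓ) 1
        rw [Real.rpow_one] at h
        rw [← h]
        ring_nf
      have e2 : n ^ (1-θ⁻¹) / n = n ^ (-θ⁻¹) := by
        have h := Real.rpow_sub hn0 (1-θ⁻¹) 1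
        rw [Real.rpow_one] at h
        rw [← h]
        ring_nf
      have e3 : n ^ (-θ⁻¹) ≤ n ^ (-ℓ) :=
        Real.rpow_le_rpow_of_exponent_le hn1 (by linarith)
      have hstep : q ≤ (2 * n ^ (1-ℓ) + C * n ^ (1-θ⁻¹)) / n := by
        rw [hqdef]
        gcongr
      calc q ≤ (2 * n ^ (1-ℓ) + C * n ^ (1-θ⁻¹)) / n := hstep
        _ = 2 * (n ^ (1-ℓ)/n) + C * (n ^ (1-θ⁻¹)/n) := by ring
        _ = 2 * n ^ (-ℓ) + C * n ^ (-θ⁻¹) := by rw [e1, e2]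
        _ ≤ 2 * n ^ (-ℓ) + C * n ^ (-ℓ) := by nlinarith [e3, hC0]
        _ = (2 + C) * n ^ (-ℓ) := by ring
    -- bound on S / n^{1-ℓ}
    have hSb : S / n ^ (1-ℓ) ≤ K * n ^ (ℓ*θ - 1) := by
      have hnneg : 0 < n ^ (-ℓ) := Real.rpow_pos_of_pos hn0 _
      have hq1θ : q ^ (1-θ) ≤ ((2+C) * n ^ (-ℓ)) ^ (1-θ) :=
        Real.rpow_le_rpow hq0.le hqB (by linarith)
      have e4 : ((2+C) * n ^ (-ℓ)) ^ (1-θ) = (2+C)^(1-θ) * n ^ (-ℓ*(1-θ)) := by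
        rw [Real.mul_rpow (by linarith) hnneg.le, ← Real.rpow_mul hn0.le]
      have hS2 : S ≤ Z * (2+C)^(1-θ) * n ^ (-ℓ*(1-θ)) := by
        calc S ≤ q ^ (1-θ) * Z := hS_le
          _ ≤ ((2+C) * n ^ (-ℓ)) ^ (1-θ) * Z :=
              mul_le_mul_of_nonneg_right hq1θ hZ0
          _ = Z * (2+C)^(1-θ) * n ^ (-ℓ*(1-θ)) := by rw [e4]; ring
      have e5 : n ^ (-ℓ*(1-θ)) / n ^ (1-ℓ) = n ^ (ℓ*θ - 1) := by
        rw [← Real.rpow_sub hn0]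
        ring_nf
      calc S / n ^ (1-ℓ) ≤ (Z * (2+C)^(1-θ) * n ^ (-ℓ*(1-θ))) / n ^ (1-ℓ) := by
            gcongr
        _ = K * (n ^ (-ℓ*(1-θ)) / n ^ (1-ℓ)) := by rw [hK]; ring
        _ = K * n ^ (ℓ*θ - 1) := by rw [e5]
    have hsplit : z n / n ^ (1-ℓ) = 1 + S / n ^ (1-ℓ) := by
      rw [heq', add_div, div_self hnl.ne']
    rw [hsplit]
    linarith
  -- squeeze
  have hub : Tendsto (fun n : ℝ => 1 + K * n ^ (ℓ*θ - 1)) atTop (nhds 1) := by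
    have h0 : Tendsto (fun n : ℝ => n ^ (ℓ*θ - 1)) atTop (nhds 0) := by
      have h := tendsto_rpow_neg_atTop (by linarith : (0:ℝ) < 1 - ℓ*θ)
      have e : (fun n : ℝ => n ^ (ℓ*θ - 1)) = fun n : ℝ => n ^ (-(1 - ℓ*θ)) := by
        funext x; ring_nf
      rw [e]; exact h
    have := (h0.const_mul K).const_add 1
    simpa using this
  apply tendsto_of_tendsto_of_tendsto_of_le_of_le' tendsto_const_nhds hub
  · filter_upwards [eventually_gt_atTop (1:ℝ)] with n hn
    exact (key n hn).1
  · filter_upwards [eventually_gt_atTop (1:ℝ)] with n hn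
    exact (key n hn).2
end

section
/- Let α > 1 and 0 < r < 1. Then a^{2r} · ∑_{k=1}^∞ k^{−1−2rα}/(1 + a·k^{−α})² converges to ∫_0^∞ x^{2(1−r)α−1}/(1+x^α)² dx as a → ∞. -/
open MeasureTheory Set Filter Real Topology


lemma SV.f_le {α β : ℝ} (hα : 0 < α) {x y : ℝ} (hx : 0 < x) (hxy : x ≤ y) (hyx : y ≤ x + 1) :
    y ^ β / (1 + y ^ α) ^ 2 ≤ x ^ β / (1 + x ^ α) ^ 2 + (x + 1) ^ β / (1 + x ^ α) ^ 2 := by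
  have hy : 0 < y := lt_of_lt_of_le hx hxy
  have hxa : (0:ℝ) ≤ x ^ α := Real.rpow_nonneg hx.le α
  rw [← add_div]
  apply div_le_div₀ (by positivity) ?_ (by positivity) ?_
  · rcases le_or_gt 0 β with hβ | hβ
    · have h1 : y ^ β ≤ (x + 1) ^ β := Real.rpow_le_rpow hy.le hyx hβ
      have h2 : (0:ℝ) ≤ x ^ β := Real.rpow_nonneg hx.le β
      linarith
    · have h1 : y ^ β ≤ x ^ β := Real.rpow_le_rpow_of_nonpos hx hxy hβ.le
      have h2 : (0:ℝ) ≤ (x + 1) ^ β := Real.rpow_nonneg (by linarith) β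
      linarith
  · have h1 : x ^ α ≤ y ^ α := Real.rpow_le_rpow hx.le hxy hα.le
    nlinarith [Real.rpow_nonneg hy.le α]

lemma SV.integrableOn_f {α β : ℝ} (hα : 0 < α) (hβ : -1 < β) (hβ' : β - 2 * α < -1) :
    IntegrableOn (fun x : ℝ => x ^ β / (1 + x ^ α) ^ 2) (Ioi (0:ℝ)) := by
  have hmeas : Measurable (fun x : ℝ => x ^ β / (1 + x ^ α) ^ 2) := by fun_prop
  rw [show Ioi (0:ℝ) = Ioc 0 1 ∪ Ioi 1 from (Set.Ioc_union_Ioi_eq_Ioi zero_le_one).symm]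
  apply IntegrableOn.union
  · have h1 : IntegrableOn (fun x : ℝ => x ^ β) (Ioc (0:ℝ) 1) := by
      have := intervalIntegral.intervalIntegrable_rpow' (a := 0) (b := 1) hβ
      rwa [intervalIntegrable_iff_integrableOn_Ioc_of_le zero_le_one] at this
    refine Integrable.mono' h1 hmeas.aestronglyMeasurable.restrict ?_
    refine (ae_restrict_iff' measurableSet_Ioc).2 (ae_of_all _ fun x hx => ?_)
    have hx0 : 0 < x := hx.1
    have hxa : (0:ℝ) ≤ x ^ α := Real.rpow_nonneg hx0.le α
    have hnum : (0:ℝ) ≤ x ^ β := Real.rpow_nonneg hx0.le β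
    rw [Real.norm_eq_abs, abs_of_nonneg (by positivity)]
    exact div_le_self hnum (by nlinarith)
  · have h1 : IntegrableOn (fun x : ℝ => x ^ (β - 2 * α)) (Ioi (1:ℝ)) :=
      (integrableOn_Ioi_rpow_iff zero_lt_one).2 hβ'
    refine Integrable.mono' h1 hmeas.aestronglyMeasurable.restrict ?_
    refine (ae_restrict_iff' measurableSet_Ioi).2 (ae_of_all _ fun x hx => ?_)
    have hx0 : (0:ℝ) < x := lt_trans zero_lt_one hx
    have hxa : (0:ℝ) ≤ x ^ α := Real.rpow_nonneg hx0.le α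
    have hnum : (0:ℝ) ≤ x ^ β := Real.rpow_nonneg hx0.le β
    rw [Real.norm_eq_abs, abs_of_nonneg (by positivity)]
    have hden : x ^ (2 * α) ≤ (1 + x ^ α) ^ 2 := by
      have h2 : x ^ (2 * α) = (x ^ α) ^ 2 := by
        rw [← Real.rpow_natCast (x ^ α) 2, ← Real.rpow_mul hx0.le]
        norm_num [mul_comm]
      nlinarith
    have hdpos : (0:ℝ) < x ^ (2 * α) := Real.rpow_pos_of_pos hx0 _
    calc x ^ β / (1 + x ^ α) ^ 2 ≤ x ^ β / x ^ (2 * α) :=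
          div_le_div_of_nonneg_left hnum ?_ ?_ |>.trans_eq rfl
      _ = x ^ (β - 2 * α) := by rw [← Real.rpow_sub hx0]
    · nlinarith
    · exact hden

lemma SV.integrableOn_shift {α β : ℝ} (hα : 0 < α) (hβ' : β - 2 * α < -1) :
    IntegrableOn (fun x : ℝ => (x + 1) ^ β / (1 + x ^ α) ^ 2) (Ioi (0:ℝ)) := by
  have hmeas : Measurable (fun x : ℝ => (x + 1) ^ β / (1 + x ^ α) ^ 2) := by fun_prop
  rw [show Ioi (0:ℝ) = Ioc 0 1 ∪ Ioi 1 from (Set.Ioc_union_Ioi_eq_Ioi zero_le_one).symm]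
  apply IntegrableOn.union
  · refine Integrable.mono' (show Integrable (fun _ : ℝ => (2:ℝ) ^ β + 1)
        (volume.restrict (Ioc 0 1)) from integrableOn_const measure_Ioc_lt_top.ne)
      hmeas.aestronglyMeasurable.restrict ?_
    refine (ae_restrict_iff' measurableSet_Ioc).2 (ae_of_all _ fun x hx => ?_)
    have hx0 : 0 < x := hx.1
    have hxa : (0:ℝ) ≤ x ^ α := Real.rpow_nonneg hx0.le α
    have hnum : (0:ℝ) ≤ (x + 1) ^ β := Real.rpow_nonneg (by linarith) β
    rw [Real.norm_eq_abs, abs_of_nonneg (by positivity)]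
    have hup : (x + 1) ^ β ≤ (2:ℝ) ^ β + 1 := by
      rcases le_or_gt 0 β with hβ | hβ
      · have := Real.rpow_le_rpow (by linarith : (0:ℝ) ≤ x + 1) (by linarith [hx.2] : x + 1 ≤ 2) hβ
        linarith [Real.rpow_nonneg (by norm_num : (0:ℝ) ≤ 2) β]
      · have := Real.rpow_le_one_of_one_le_of_nonpos (by linarith : (1:ℝ) ≤ x + 1) hβ.le
        linarith [Real.rpow_nonneg (by norm_num : (0:ℝ) ≤ 2) β]
    exact le_trans (div_le_self hnum (by nlinarith)) hup
  · have h1 : IntegrableOn (fun x : ℝ => ((2:ℝ) ^ β + 1) * x ^ (β - 2 * α)) (Ioi (1:ℝ)) :=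
      ((integrableOn_Ioi_rpow_iff zero_lt_one).2 hβ').const_mul _
    refine Integrable.mono' h1 hmeas.aestronglyMeasurable.restrict ?_
    refine (ae_restrict_iff' measurableSet_Ioi).2 (ae_of_all _ fun x hx => ?_)
    have hx1 : (1:ℝ) < x := hx
    have hx0 : (0:ℝ) < x := lt_trans zero_lt_one hx1
    have hxa : (0:ℝ) ≤ x ^ α := Real.rpow_nonneg hx0.le α
    have hxb : (0:ℝ) ≤ x ^ β := Real.rpow_nonneg hx0.le β
    have hnum : (0:ℝ) ≤ (x + 1) ^ β := Real.rpow_nonneg (by linarith) β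
    rw [Real.norm_eq_abs, abs_of_nonneg (by positivity)]
    have h2b : (0:ℝ) ≤ (2:ℝ) ^ β := Real.rpow_nonneg (by norm_num) β
    have hup : (x + 1) ^ β ≤ ((2:ℝ) ^ β + 1) * x ^ β := by
      rcases le_or_gt 0 β with hβ | hβ
      · have h1 : (x + 1) ^ β ≤ (2 * x) ^ β :=
          Real.rpow_le_rpow (by linarith) (by linarith) hβ
        rw [Real.mul_rpow (by norm_num) hx0.le] at h1
        nlinarith
      · have h1 : (x + 1) ^ β ≤ x ^ β := Real.rpow_le_rpow_of_nonpos hx0 (by linarith) hβ.le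
        nlinarith
    have hden : x ^ (2 * α) ≤ (1 + x ^ α) ^ 2 := by
      have h2 : x ^ (2 * α) = (x ^ α) ^ 2 := by
        rw [← Real.rpow_natCast (x ^ α) 2, ← Real.rpow_mul hx0.le]
        norm_num [mul_comm]
      nlinarith
    have hdpos : (0:ℝ) < x ^ (2 * α) := Real.rpow_pos_of_pos hx0 _
    calc (x + 1) ^ β / (1 + x ^ α) ^ 2
        ≤ (((2:ℝ) ^ β + 1) * x ^ β) / x ^ (2 * α) :=
          div_le_div₀ (by positivity) hup hdpos hden
      _ = ((2:ℝ) ^ β + 1) * x ^ (β - 2 * α) := by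
          rw [mul_div_assoc, ← Real.rpow_sub hx0]


lemma SV.key {α r a k : ℝ} (hα : 0 < α) (ha : 0 < a) (hk : 0 < k) :
    a ^ (2 * r) * (k ^ (-1 - 2 * r * α) / (1 + a * k ^ (-α)) ^ 2)
      = a ^ (-α⁻¹) *
        ((a ^ (-α⁻¹) * k) ^ (2 * (1 - r) * α - 1) / (1 + (a ^ (-α⁻¹) * k) ^ α) ^ 2) := by
  have hh : 0 < a ^ (-α⁻¹) := Real.rpow_pos_of_pos ha _
  have hX : 0 < k ^ α := Real.rpow_pos_of_pos hk _
  have hXi : 0 < k ^ (-α) := Real.rpow_pos_of_pos hk _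
  have hD1 : (0:ℝ) < 1 + a * k ^ (-α) := by positivity
  have e1 : (a ^ (-α⁻¹) * k) ^ α = a⁻¹ * k ^ α := by
    rw [Real.mul_rpow hh.le hk.le, ← Real.rpow_mul ha.le]
    congr 1
    rw [show -α⁻¹ * α = -1 by field_simp, Real.rpow_neg_one]
  have e3 : (a ^ (-α⁻¹) * k) ^ (2 * (1 - r) * α - 1)
      = a ^ (-α⁻¹ * (2 * (1 - r) * α - 1)) * k ^ (2 * (1 - r) * α - 1) := by
    rw [Real.mul_rpow hh.le hk.le, ← Real.rpow_mul ha.le]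
  have hrel : 1 + a⁻¹ * k ^ α = (a⁻¹ * k ^ α) * (1 + a * k ^ (-α)) := by
    rw [Real.rpow_neg hk.le]
    field_simp
    ring
  have hq : ((a⁻¹ * k ^ α) ^ 2) ≠ 0 := by positivity
  have S : a ^ (2 * r) * k ^ (-1 - 2 * r * α) * (a⁻¹ * k ^ α) ^ 2
      = a ^ (-α⁻¹) * (a ^ (-α⁻¹ * (2 * (1 - r) * α - 1)) * k ^ (2 * (1 - r) * α - 1)) := by
    rw [← Real.rpow_neg_one a, mul_pow, ← Real.rpow_natCast (a ^ (-1:ℝ)) 2,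
      ← Real.rpow_natCast (k ^ α) 2, ← Real.rpow_mul ha.le, ← Real.rpow_mul hk.le,
      mul_mul_mul_comm, ← Real.rpow_add ha, ← Real.rpow_add hk, ← mul_assoc,
      ← Real.rpow_add ha]
    congr 1
    · congr 1
      field_simp
      ring
    · congr 1
      push_cast
      ring
  calc a ^ (2 * r) * (k ^ (-1 - 2 * r * α) / (1 + a * k ^ (-α)) ^ 2)
      = (a ^ (2 * r) * k ^ (-1 - 2 * r * α) * (a⁻¹ * k ^ α) ^ 2) /
        ((a⁻¹ * k ^ α) ^ 2 * (1 + a * k ^ (-α)) ^ 2) := by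
        rw [mul_comm ((a⁻¹ * k ^ α) ^ 2) ((1 + a * k ^ (-α)) ^ 2),
          mul_div_mul_right _ _ hq, mul_div_assoc]
    _ = (a ^ (-α⁻¹) * (a ^ (-α⁻¹ * (2 * (1 - r) * α - 1)) * k ^ (2 * (1 - r) * α - 1))) /
        ((a⁻¹ * k ^ α) ^ 2 * (1 + a * k ^ (-α)) ^ 2) := by rw [S]
    _ = a ^ (-α⁻¹) *
        ((a ^ (-α⁻¹) * k) ^ (2 * (1 - r) * α - 1) / (1 + (a ^ (-α⁻¹) * k) ^ α) ^ 2) := by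
        rw [e1, hrel, e3]
        ring

/-- For α > 1 and 0 < r < 1,
`a^{2r} · ∑_{k≥1} k^{-1-2rα}/(1+a k^{-α})² → ∫_0^∞ x^{2(1-r)α-1}/(1+x^α)² dx`
as `a → ∞`. -/
theorem sample_variance_asymptotics_nonsaturated (α r : ℝ)
    (hα : 1 < α) (hr : 0 < r) (hr1 : r < 1) :
    Filter.Tendsto
      (fun a : ℝ => a ^ (2 * r) *
        ∑' k : ℕ+, (k : ℝ) ^ (-1 - 2 * r * α) / (1 + a * (k : ℝ) ^ (-α)) ^ 2)
      Filter.atTop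
      (nhds (∫ x in Set.Ioi (0 : ℝ), x ^ (2 * (1 - r) * α - 1) / (1 + x ^ α) ^ 2)) := by
  have hα0 : (0:ℝ) < α := lt_trans one_pos hα
  have hβ : -1 < 2 * (1 - r) * α - 1 := by nlinarith
  have hβ' : 2 * (1 - r) * α - 1 - 2 * α < -1 := by nlinarith
  set f : ℝ → ℝ := fun x => x ^ (2 * (1 - r) * α - 1) / (1 + x ^ α) ^ 2 with hfdef
  have hGint : Integrable (fun x : ℝ => x ^ (2 * (1 - r) * α - 1) / (1 + x ^ α) ^ 2 +
      (x + 1) ^ (2 * (1 - r) * α - 1) / (1 + x ^ α) ^ 2) (volume.restrict (Ioi 0)) :=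
    (SV.integrableOn_f hα0 hβ hβ').add (SV.integrableOn_shift hα0 hβ')
  have hfmeas : Measurable f := by fun_prop
  set g : ℝ → ℝ → ℝ := fun h x => f (h * ⌈x / h⌉) with hgdef
  have hgbd : ∀ h : ℝ, 0 < h → h ≤ 1 → ∀ x ∈ Ioi (0:ℝ), ‖g h x‖ ≤
      x ^ (2 * (1 - r) * α - 1) / (1 + x ^ α) ^ 2 +
      (x + 1) ^ (2 * (1 - r) * α - 1) / (1 + x ^ α) ^ 2 := by
    intro h hh hh1 x hx
    have hx0 : (0:ℝ) < x := hx
    have hceil : x ≤ h * ⌈x / h⌉ := by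
      calc x = h * (x / h) := by field_simp
        _ ≤ h * ⌈x / h⌉ := mul_le_mul_of_nonneg_left (Int.le_ceil _) hh.le
    have hceil2 : h * ⌈x / h⌉ ≤ x + 1 := by
      calc (h * ⌈x / h⌉ : ℝ) ≤ h * (x / h + 1) :=
            mul_le_mul_of_nonneg_left (le_of_lt (Int.ceil_lt_add_one _)) hh.le
        _ = x + h := by field_simp
        _ ≤ x + 1 := by linarith
    have hy0 : (0:ℝ) < h * ⌈x / h⌉ := lt_of_lt_of_le hx0 hceil
    show ‖f (h * ⌈x / h⌉)‖ ≤ _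
    rw [hfdef, Real.norm_eq_abs,
      abs_of_nonneg (div_nonneg (Real.rpow_nonneg hy0.le _) (sq_nonneg _))]
    exact SV.f_le hα0 hx0 hceil hceil2
  have hgmeas : ∀ h : ℝ, Measurable (g h) := by
    intro h
    have h1 : Measurable (fun x : ℝ => (h * (⌈x / h⌉ : ℤ) : ℝ)) :=
      measurable_const.mul
        (measurable_from_top.comp (Int.measurable_ceil.comp (measurable_id.div_const h)))
    exact hfmeas.comp h1
  have hgint : ∀ h : ℝ, 0 < h → h ≤ 1 → IntegrableOn (g h) (Ioi 0) := fun h hh hh1 =>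
    Integrable.mono' hGint (hgmeas h).aestronglyMeasurable.restrict
      ((ae_restrict_iff' measurableSet_Ioi).2 (ae_of_all _ (hgbd h hh hh1)))
  have hinv : -α⁻¹ ≤ 0 := neg_nonpos.2 (inv_nonneg.2 hα0.le)
  have hDCT : Tendsto (fun a : ℝ => ∫ x in Ioi (0:ℝ), g (a ^ (-α⁻¹)) x) atTop
      (𝓝 (∫ x in Ioi (0:ℝ), f x)) := by
    refine tendsto_integral_filter_of_dominated_convergence
      (fun x => x ^ (2 * (1 - r) * α - 1) / (1 + x ^ α) ^ 2 +
        (x + 1) ^ (2 * (1 - r) * α - 1) / (1 + x ^ α) ^ 2)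
      (Eventually.of_forall fun a => (hgmeas _).aestronglyMeasurable.restrict) ?_ hGint ?_
    · filter_upwards [eventually_ge_atTop (1:ℝ)] with a ha
      have hh : 0 < a ^ (-α⁻¹) := Real.rpow_pos_of_pos (by linarith) _
      have hh1 : a ^ (-α⁻¹) ≤ 1 := Real.rpow_le_one_of_one_le_of_nonpos ha hinv
      exact (ae_restrict_iff' measurableSet_Ioi).2 (ae_of_all _ (hgbd _ hh hh1))
    · refine (ae_restrict_iff' measurableSet_Ioi).2 (ae_of_all _ fun x hx => ?_)
      have hx0 : (0:ℝ) < x := hx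
      have hcf : ContinuousAt f x := by
        have h1 : ContinuousAt (fun y : ℝ => y ^ (2 * (1 - r) * α - 1)) x :=
          Real.continuousAt_rpow_const x _ (Or.inl hx0.ne')
        have h2 : ContinuousAt (fun y : ℝ => (1 + y ^ α) ^ 2) x :=
          (continuousAt_const.add (Real.continuousAt_rpow_const x α (Or.inl hx0.ne'))).pow 2
        have hne : ((1 + x ^ α) ^ 2 : ℝ) ≠ 0 := by
          have := Real.rpow_pos_of_pos hx0 α
          positivity
        exact h1.div h2 hne
      have hh0 : Tendsto (fun a : ℝ => a ^ (-α⁻¹)) atTop (𝓝 0) :=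
        tendsto_rpow_neg_atTop (by positivity)
      have hy : Tendsto (fun a : ℝ => (a ^ (-α⁻¹) * ⌈x / a ^ (-α⁻¹)⌉ : ℝ)) atTop (𝓝 x) := by
        have hupper : Tendsto (fun a : ℝ => x + a ^ (-α⁻¹)) atTop (𝓝 x) := by
          simpa using tendsto_const_nhds.add hh0
        refine tendsto_of_tendsto_of_tendsto_of_le_of_le' tendsto_const_nhds hupper ?_ ?_
        · filter_upwards [eventually_ge_atTop (1:ℝ)] with a ha
          have hh : 0 < a ^ (-α⁻¹) := Real.rpow_pos_of_pos (by linarith) _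
          calc x = a ^ (-α⁻¹) * (x / a ^ (-α⁻¹)) := by field_simp
            _ ≤ _ := mul_le_mul_of_nonneg_left (Int.le_ceil _) hh.le
        · filter_upwards [eventually_ge_atTop (1:ℝ)] with a ha
          have hh : 0 < a ^ (-α⁻¹) := Real.rpow_pos_of_pos (by linarith) _
          calc (a ^ (-α⁻¹) * ⌈x / a ^ (-α⁻¹)⌉ : ℝ)
              ≤ a ^ (-α⁻¹) * (x / a ^ (-α⁻¹) + 1) :=
                mul_le_mul_of_nonneg_left (le_of_lt (Int.ceil_lt_add_one _)) hh.le
            _ = x + a ^ (-α⁻¹) := by field_simp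
      exact (hcf.tendsto.comp hy : _)
  refine Tendsto.congr' ?_ hDCT
  filter_upwards [eventually_ge_atTop (1:ℝ)] with a ha1
  have ha : (0:ℝ) < a := by linarith
  have hh : 0 < a ^ (-α⁻¹) := Real.rpow_pos_of_pos ha _
  have hh1 : a ^ (-α⁻¹) ≤ 1 := Real.rpow_le_one_of_one_le_of_nonpos ha1 hinv
  set h : ℝ := a ^ (-α⁻¹) with hhdef
  have hU : (⋃ n : ℕ, Ioc (h * n) (h * (n + 1))) = Ioi (0:ℝ) := by
    ext x
    simp only [mem_iUnion, mem_Ioc, mem_Ioi]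
    constructor
    · rintro ⟨n, h1, _⟩
      have : (0:ℝ) ≤ h * n := by positivity
      linarith
    · intro hx
      have hpos : 0 < ⌈x / h⌉ := Int.ceil_pos.2 (div_pos hx hh)
      have hcast : (((⌈x / h⌉ - 1).toNat : ℕ) : ℝ) = (⌈x / h⌉ : ℝ) - 1 := by
        have h2 : ((⌈x / h⌉ - 1).toNat : ℤ) = ⌈x / h⌉ - 1 := Int.toNat_of_nonneg (by omega)
        exact_mod_cast congrArg (Int.cast : ℤ → ℝ) h2
      refine ⟨(⌈x / h⌉ - 1).toNat, ?_, ?_⟩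
      · rw [hcast]
        have h2 : (⌈x / h⌉ : ℝ) - 1 < x / h := by
          have := Int.ceil_lt_add_one (x / h); linarith
        calc h * ((⌈x / h⌉ : ℝ) - 1) < h * (x / h) := mul_lt_mul_of_pos_left h2 hh
          _ = x := by field_simp
      · rw [hcast]
        have h3 : x / h ≤ (⌈x / h⌉ : ℝ) := Int.le_ceil _
        calc x = h * (x / h) := by field_simp
          _ ≤ h * (⌈x / h⌉ : ℝ) := mul_le_mul_of_nonneg_left h3 hh.le
          _ = h * ((⌈x / h⌉ : ℝ) - 1 + 1) := by ring
  have hdisj : Pairwise (Function.onFun Disjoint fun n : ℕ => Ioc (h * n) (h * (n + 1))) := by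
    intro m n hmn
    have key : ∀ m n : ℕ, m < n → h * ((m:ℝ) + 1) ≤ h * n := fun m n hlt =>
      mul_le_mul_of_nonneg_left (by exact_mod_cast Nat.succ_le_of_lt hlt) hh.le
    rw [Function.onFun, Set.Ioc_disjoint_Ioc]
    rcases hmn.lt_or_gt with hlt | hlt
    · exact min_le_of_left_le (le_trans (key m n hlt) (le_max_right _ _))
    · exact min_le_of_right_le (le_trans (key n m hlt) (le_max_left _ _))
  have hint : IntegrableOn (g h) (⋃ n : ℕ, Ioc (h * n) (h * (n + 1))) := by
    rw [hU]; exact hgint h hh hh1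
  have e4 : ∫ x in Ioi (0:ℝ), g h x = ∑' n : ℕ, ∫ x in Ioc (h * n) (h * (n + 1)), g h x := by
    rw [← hU]
    exact integral_iUnion (fun n => measurableSet_Ioc) hdisj hint
  have e5 : ∀ n : ℕ, ∫ x in Ioc (h * n) (h * (n + 1)), g h x = h * f (h * ((n:ℝ) + 1)) := by
    intro n
    have hEq : EqOn (g h) (fun _ => f (h * ((n:ℝ) + 1))) (Ioc (h * n) (h * (n + 1))) := by
      intro x hx
      have h1 : (⌈x / h⌉ : ℤ) = (n : ℤ) + 1 := by
        rw [Int.ceil_eq_iff]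
        constructor
        · push_cast
          rw [lt_div_iff₀ hh]
          have := hx.1
          ring_nf
          ring_nf at this
          linarith
        · push_cast
          rw [div_le_iff₀ hh]
          have := hx.2
          linarith [hx.2]
      show f (h * (⌈x / h⌉ : ℤ)) = _
      rw [h1]
      push_cast
      ring_nf
    rw [setIntegral_congr_fun measurableSet_Ioc hEq, setIntegral_const,
      Real.volume_real_Ioc_of_le (by nlinarith : h * (n:ℝ) ≤ h * ((n:ℝ) + 1)), smul_eq_mul]
    congr 1
    ring
  have e6 : ∑' n : ℕ, h * f (h * ((n:ℝ) + 1)) = ∑' k : ℕ+, h * f (h * (k:ℝ)) := by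
    rw [← Equiv.pnatEquivNat.symm.tsum_eq (fun k : ℕ+ => h * f (h * (k:ℝ)))]
    refine tsum_congr fun n => ?_
    have h7 : ((Equiv.pnatEquivNat.symm n : ℕ+) : ℕ) = n + 1 := rfl
    have h8 : ((Equiv.pnatEquivNat.symm n : ℕ+) : ℝ) = (n:ℝ) + 1 := by exact_mod_cast h7
    rw [h8]
  show (∫ x in Ioi (0:ℝ), g h x) =
    a ^ (2 * r) * ∑' k : ℕ+, (k : ℝ) ^ (-1 - 2 * r * α) / (1 + a * (k : ℝ) ^ (-α)) ^ 2
  rw [e4, tsum_congr e5, e6, ← tsum_mul_left]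
  refine tsum_congr fun k => ?_
  have hk : (0:ℝ) < (k:ℝ) := by exact_mod_cast k.pos
  exact (SV.key hα0 ha hk).symm
end

section
/- Let α > 0 and r > 1. Then the function a ↦ ∑_{k=1}^∞ k^{−1−2rα}/(1 + a·k^{−α})² is Θ(a^{−2}) as a → ∞; that is, there exist constants 0 < c ≤ C and a₀ > 0 such that for all a ≥ a₀, c·a^{−2} ≤ ∑_{k=1}^∞ k^{−1−2rα}/(1 + a·k^{−α})² ≤ C·a^{−2}. -/
/-- For α > 0 and r > 1 (saturated case), the sample-variance sum
`∑_{k≥1} k^{-1-2rα}/(1+a k^{-α})²` is `Θ(a^{-2})` as `a → ∞`. -/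
theorem sample_variance_asymptotics_saturated (α r : ℝ) (hα : 0 < α) (hr : 1 < r) :
    ∃ c C a₀ : ℝ, 0 < c ∧ c ≤ C ∧ 0 < a₀ ∧ ∀ a : ℝ, a₀ ≤ a →
      c * a ^ (-2 : ℝ) ≤
        (∑' k : ℕ+, (k : ℝ) ^ (-1 - 2 * r * α) / (1 + a * (k : ℝ) ^ (-α)) ^ 2) ∧
      (∑' k : ℕ+, (k : ℝ) ^ (-1 - 2 * r * α) / (1 + a * (k : ℝ) ^ (-α)) ^ 2) ≤
        C * a ^ (-2 : ℝ) := by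
  have hp : (-1 - 2*(r-1)*α) < -1 := by nlinarith
  have hg0 : Summable (fun n : ℕ => (n:ℝ) ^ (-1 - 2*(r-1)*α)) :=
    Real.summable_nat_rpow.mpr hp
  have hg : Summable (fun k : ℕ+ => ((k:ℕ):ℝ) ^ (-1 - 2*(r-1)*α)) :=
    hg0.comp_injective PNat.coe_injective
  have hg' : Summable (fun k : ℕ+ => (k:ℝ) ^ (-1 - 2*(r-1)*α)) := hg
  set C0 : ℝ := ∑' k : ℕ+, (k:ℝ) ^ (-1 - 2*(r-1)*α) with hC0
  refine ⟨1/4, max C0 (1/4), 1, by norm_num, le_max_right _ _, one_pos, ?_⟩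
  intro a ha
  have ha0 : (0:ℝ) < a := lt_of_lt_of_le one_pos ha
  have hainv : a ^ (-2:ℝ) = (a^2)⁻¹ := by
    rw [Real.rpow_neg ha0.le, ← Real.rpow_natCast a 2]; norm_num
  have key : ∀ k : ℕ+, (k:ℝ) ^ (-1 - 2*r*α) / (1 + a * (k:ℝ)^(-α))^2
      ≤ a ^ (-2:ℝ) * (k:ℝ) ^ (-1 - 2*(r-1)*α) := by
    intro k
    have hx : (0:ℝ) < (k:ℝ) := by exact_mod_cast k.pos
    have hxa : 0 < (k:ℝ)^(-α) := Real.rpow_pos_of_pos hx _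
    have hd : 0 < a * (k:ℝ)^(-α) := mul_pos ha0 hxa
    have hden : (a * (k:ℝ)^(-α))^2 ≤ (1 + a * (k:ℝ)^(-α))^2 := by nlinarith
    have h1 : (k:ℝ) ^ (-1 - 2*r*α) / (1 + a * (k:ℝ)^(-α))^2
        ≤ (k:ℝ) ^ (-1 - 2*r*α) / (a * (k:ℝ)^(-α))^2 :=
      div_le_div_of_nonneg_left (Real.rpow_nonneg hx.le _) (by positivity) hden
    refine h1.trans_eq ?_
    have e1 : ((k:ℝ)^(-α))^(2:ℕ) = (k:ℝ)^(-(2*α)) := by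
      rw [← Real.rpow_natCast ((k:ℝ)^(-α)) 2, ← Real.rpow_mul hx.le]
      norm_num; ring_nf
    have e2 : (k:ℝ)^(-1-2*(r-1)*α) * (k:ℝ)^(-(2*α)) = (k:ℝ)^(-1-2*r*α) := by
      rw [← Real.rpow_add hx]; congr 1; ring
    rw [mul_pow, e1, eq_comm, eq_div_iff (by positivity), hainv]
    calc (a^2)⁻¹ * (k:ℝ)^(-1-2*(r-1)*α) * (a^2 * (k:ℝ)^(-(2*α)))
        = ((a^2)⁻¹ * a^2) * ((k:ℝ)^(-1-2*(r-1)*α) * (k:ℝ)^(-(2*α))) := by ring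
      _ = (k:ℝ)^(-1-2*r*α) := by rw [inv_mul_cancel₀ (by positivity), one_mul, e2]
  have hf : Summable (fun k : ℕ+ => (k:ℝ) ^ (-1 - 2*r*α) / (1 + a * (k:ℝ)^(-α))^2) := by
    refine Summable.of_nonneg_of_le (fun k => ?_) key (hg'.mul_left _)
    have hx : (0:ℝ) < (k:ℝ) := by exact_mod_cast k.pos
    positivity
  constructor
  · -- lower bound via the k = 1 term
    have h1 : (1 : ℝ) / (1 + a)^2
        ≤ ∑' k : ℕ+, (k:ℝ) ^ (-1 - 2*r*α) / (1 + a * (k:ℝ)^(-α))^2 := by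
      have := Summable.le_tsum hf 1 (fun k _ => by
        have hx : (0:ℝ) < (k:ℝ) := by exact_mod_cast k.pos
        positivity)
      simpa using this
    refine le_trans ?_ h1
    rw [hainv]
    have h4 : (1+a)^2 ≤ 4*a^2 := by nlinarith
    have : ((4:ℝ)*a^2)⁻¹ ≤ ((1+a)^2)⁻¹ := by
      apply inv_anti₀ (by positivity) h4
    calc (1/4 : ℝ) * (a^2)⁻¹ = (4*a^2)⁻¹ := by field_simp
      _ ≤ ((1+a)^2)⁻¹ := this
      _ = 1/(1+a)^2 := by rw [one_div]
  · have h2 : (∑' k : ℕ+, (k:ℝ) ^ (-1 - 2*r*α) / (1 + a * (k:ℝ)^(-α))^2)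
        ≤ ∑' k : ℕ+, a ^ (-2:ℝ) * (k:ℝ) ^ (-1 - 2*(r-1)*α) :=
      Summable.tsum_le_tsum key hf (hg'.mul_left _)
    rw [tsum_mul_left] at h2
    refine h2.trans ?_
    rw [mul_comm]
    have ha2 : 0 ≤ a ^ (-2:ℝ) := Real.rpow_nonneg ha0.le _
    exact mul_le_mul_of_nonneg_right (le_max_left _ _) ha2
end

section
/- Let α > 1. Then a^{2−1/α} · ∑_{k=1}^∞ 1/(k^α + a)² converges to ∫_0^∞ dx/(1+x^α)² as a → ∞. -/
open MeasureTheory Set Filter Real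

namespace NVA

noncomputable def f (α x : ℝ) : ℝ := 1 / (1 + x ^ α) ^ 2

lemma f_nonneg (α : ℝ) {x : ℝ} (hx : 0 ≤ x) : 0 ≤ f α x := by
  unfold f
  have : (0:ℝ) ≤ x ^ α := Real.rpow_nonneg hx α
  positivity

lemma f_antitone {α : ℝ} (hα : 0 < α) : AntitoneOn (f α) (Ici 0) := by
  intro x hx y hy hxy
  unfold f
  have hx' : (0:ℝ) ≤ x := hx
  have h1 : x ^ α ≤ y ^ α := Real.rpow_le_rpow hx' hxy hα.le
  have h2 : (0:ℝ) ≤ x ^ α := Real.rpow_nonneg hx' α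
  gcongr

lemma f_cont {α : ℝ} (hα : 0 < α) : ContinuousOn (f α) (Ici 0) := by
  have h1 : ContinuousOn (fun x : ℝ => x ^ α) (Ici 0) := by
    intro x hx
    exact (Real.continuousAt_rpow_const x α (Or.inr hα.le)).continuousWithinAt
  apply ContinuousOn.div continuousOn_const
  · exact ((continuousOn_const.add h1).pow 2)
  · intro x hx
    have : (0:ℝ) ≤ x ^ α := Real.rpow_nonneg hx α
    positivity

lemma f_integrable {α : ℝ} (hα : 1 < α) : IntegrableOn (f α) (Ioi 0) := by
  have hα0 : 0 < α := by linarith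
  have hsplit : Ioi (0:ℝ) = Ioc 0 1 ∪ Ioi 1 := (Set.Ioc_union_Ioi_eq_Ioi zero_le_one).symm
  rw [hsplit]
  apply IntegrableOn.union
  · exact (((f_cont hα0).mono (fun x hx => hx.1)).integrableOn_Icc).mono_set
      Ioc_subset_Icc_self
  · have hint : IntegrableOn (fun x : ℝ => x ^ (-(2*α))) (Ioi 1) :=
      integrableOn_Ioi_rpow_of_lt (by linarith) one_pos
    have hmeas : AEStronglyMeasurable (f α) (volume.restrict (Ioi (1:ℝ))) :=
      ((f_cont hα0).mono (fun x (hx : x ∈ Ioi (1:ℝ)) => mem_Ici.mpr (le_of_lt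
        (lt_of_le_of_lt zero_le_one hx)))).aestronglyMeasurable measurableSet_Ioi
    refine Integrable.mono hint hmeas ?_
    filter_upwards [ae_restrict_mem measurableSet_Ioi] with x hx
    have hx0 : (0:ℝ) < x := lt_trans zero_lt_one hx
    have hxa : (0:ℝ) < x ^ α := Real.rpow_pos_of_pos hx0 α
    have h1 : f α x ≤ x ^ (-(2*α)) := by
      have e1 : x ^ (-(2*α)) = 1 / (x ^ α) ^ 2 := by
        rw [Real.rpow_neg hx0.le, one_div, show (2:ℝ)*α = α*2 by ring,
          Real.rpow_mul hx0.le, Real.rpow_two]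
      rw [e1]
      unfold f
      exact one_div_le_one_div_of_le (by positivity) (by nlinarith)
    have h2 : (0:ℝ) ≤ f α x := f_nonneg α hx0.le
    have h3 : (0:ℝ) ≤ x ^ (-(2*α)) := Real.rpow_nonneg hx0.le _
    rw [Real.norm_eq_abs, Real.norm_eq_abs, abs_of_nonneg h2, abs_of_nonneg h3]
    exact h1

lemma key {α : ℝ} (hα : 1 < α) {h : ℝ} (hh : 0 < h) :
    (∫ x in Ioi (0:ℝ), f α x) - h ≤ (∑' k : ℕ, h * f α ((k+1) * h)) ∧
    (∑' k : ℕ, h * f α ((k+1) * h)) ≤ ∫ x in Ioi (0:ℝ), f α x := by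
  have hα0 : 0 < α := by linarith
  set s : ℕ → Set ℝ := fun k => Ioc ((k:ℝ)*h) (((k:ℝ)+1)*h) with hs
  have hU : (⋃ k, s k) = Ioi (0:ℝ) := by
    ext x
    simp only [mem_iUnion, hs, mem_Ioc, mem_Ioi]
    constructor
    · rintro ⟨k, hk1, hk2⟩
      have : (0:ℝ) ≤ (k:ℝ)*h := by positivity
      linarith
    · intro hx
      set t := x / h with ht
      have htpos : 0 < t := div_pos hx hh
      have hc1 : (0:ℕ) < ⌈t⌉₊ := Nat.ceil_pos.mpr htpos
      refine ⟨⌈t⌉₊ - 1, ?_, ?_⟩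
      · have h1 : ((⌈t⌉₊ - 1 : ℕ) : ℝ) < t := by
          rw [← Nat.lt_ceil]
          omega
        calc ((⌈t⌉₊ - 1 : ℕ) : ℝ) * h < t * h := by
              exact mul_lt_mul_of_pos_right h1 hh
          _ = x := by rw [ht, div_mul_cancel₀ x hh.ne']
      · have h2 : t ≤ ((⌈t⌉₊ - 1 : ℕ) : ℝ) + 1 := by
          have := Nat.le_ceil t
          have : ((⌈t⌉₊ - 1 : ℕ) : ℝ) + 1 = (⌈t⌉₊ : ℝ) := by
            have : (⌈t⌉₊ - 1 : ℕ) + 1 = ⌈t⌉₊ := by omega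
            exact_mod_cast congrArg (Nat.cast : ℕ → ℝ) this
          rw [this]
          exact Nat.le_ceil t
        calc x = t * h := by rw [ht, div_mul_cancel₀ x hh.ne']
          _ ≤ (((⌈t⌉₊ - 1 : ℕ) : ℝ) + 1) * h := mul_le_mul_of_nonneg_right h2 hh.le
  have hmeas : ∀ k, MeasurableSet (s k) := fun k => measurableSet_Ioc
  have hdisj : Pairwise (Function.onFun Disjoint s) := by
    intro i j hij
    apply Set.Ioc_disjoint_Ioc.mpr
    rcases hij.lt_or_gt with hlt | hlt
    · have : (i:ℝ) + 1 ≤ (j:ℝ) := by exact_mod_cast hlt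
      apply min_le_of_left_le
      apply le_max_of_le_right
      nlinarith
    · have : (j:ℝ) + 1 ≤ (i:ℝ) := by exact_mod_cast hlt
      apply min_le_of_right_le
      apply le_max_of_le_left
      nlinarith
  have hIntU : IntegrableOn (f α) (⋃ k, s k) := hU ▸ f_integrable hα
  have hsum : HasSum (fun k => ∫ x in s k, f α x) (∫ x in Ioi (0:ℝ), f α x) := by
    have := MeasureTheory.hasSum_integral_iUnion hmeas hdisj hIntU
    rwa [hU] at this
  have hknn : ∀ k : ℕ, (0:ℝ) ≤ (k:ℝ) * h := fun k => by positivity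
  have hvol : ∀ k : ℕ, (volume (s k)).toReal = h := by
    intro k
    rw [hs]
    simp only [Real.volume_Ioc]
    rw [ENNReal.toReal_ofReal (by nlinarith)]
    ring
  have hintk : ∀ k, IntegrableOn (f α) (s k) := by
    intro k
    apply (f_integrable hα).mono_set
    intro x hx
    exact lt_of_le_of_lt (hknn k) hx.1
  have hlow : ∀ k : ℕ, h * f α (((k:ℝ)+1) * h) ≤ ∫ x in s k, f α x := by
    intro k
    have hc : ∫ x in s k, f α (((k:ℝ)+1)*h) = h * f α (((k:ℝ)+1)*h) := by
      rw [setIntegral_const, measureReal_def, hvol k, smul_eq_mul]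
    rw [← hc]
    apply setIntegral_mono_on (integrableOn_const measure_Ioc_lt_top.ne) (hintk k) (hmeas k)
    intro x hx
    exact f_antitone hα0 (mem_Ici.mpr (le_of_lt (lt_of_le_of_lt (hknn k) hx.1)))
      (mem_Ici.mpr (by positivity)) hx.2
  have hupp : ∀ k : ℕ, (∫ x in s k, f α x) ≤ h * f α ((k:ℝ) * h) := by
    intro k
    have hc : ∫ x in s k, f α ((k:ℝ)*h) = h * f α ((k:ℝ)*h) := by
      rw [setIntegral_const, measureReal_def, hvol k, smul_eq_mul]
    rw [← hc]
    apply setIntegral_mono_on (hintk k) (integrableOn_const measure_Ioc_lt_top.ne) (hmeas k)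
    intro x hx
    exact f_antitone hα0 (mem_Ici.mpr (hknn k))
      (mem_Ici.mpr (le_of_lt (lt_of_le_of_lt (hknn k) hx.1))) hx.1.le
  have hgnn : ∀ k : ℕ, (0:ℝ) ≤ h * f α (((k:ℝ)+1) * h) := by
    intro k
    have := f_nonneg α (x := ((k:ℝ)+1)*h) (by positivity)
    exact mul_nonneg hh.le this
  have hgsum : Summable (fun k : ℕ => h * f α (((k:ℝ)+1) * h)) :=
    Summable.of_nonneg_of_le hgnn hlow hsum.summable
  constructor
  · -- lower bound
    have hshift : Summable (fun k : ℕ => h * f α ((k:ℝ) * h)) := by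
      rw [← summable_nat_add_iff 1]
      convert hgsum using 2 with k
      · rfl
      push_cast
      ring_nf
    have h1 : (∫ x in Ioi (0:ℝ), f α x) ≤ ∑' k : ℕ, h * f α ((k:ℝ) * h) := by
      rw [← hsum.tsum_eq]
      exact Summable.tsum_le_tsum hupp hsum.summable hshift
    have h2 : (∑' k : ℕ, h * f α ((k:ℝ) * h))
        = h * f α ((0:ℝ)*h) + ∑' k : ℕ, h * f α (((k:ℝ)+1) * h) := by
      rw [Summable.tsum_eq_zero_add hshift]
      norm_num
    have hf0 : f α ((0:ℝ)*h) = 1 := by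
      unfold f
      rw [zero_mul, Real.zero_rpow (by linarith)]
      norm_num
    rw [h2, hf0, mul_one] at h1
    linarith
  · rw [← hsum.tsum_eq]
    exact Summable.tsum_le_tsum hlow hgsum hsum.summable

end NVA

/-- For α > 1, `a^{2-1/α} · ∑_{k≥1} 1/(k^α+a)² → ∫_0^∞ dx/(1+x^α)²`
as `a → ∞` (asymptotics of the noise-variance sum). -/
theorem noise_variance_asymptotics (α : ℝ) (hα : 1 < α) :
    Filter.Tendsto
      (fun a : ℝ => a ^ (2 - 1 / α) * ∑' k : ℕ+, 1 / ((k : ℝ) ^ α + a) ^ 2)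
      Filter.atTop
      (nhds (∫ x in Set.Ioi (0 : ℝ), 1 / (1 + x ^ α) ^ 2)) := by
  have hα0 : 0 < α := by linarith
  set I := ∫ x in Set.Ioi (0:ℝ), 1 / (1 + x ^ α) ^ 2 with hI
  have hIf : I = ∫ x in Set.Ioi (0:ℝ), NVA.f α x := rfl
  have heq : ∀ a : ℝ, 1 ≤ a →
      a ^ (2 - 1/α) * ∑' k : ℕ+, 1 / ((k:ℝ)^α + a)^2
        = ∑' k : ℕ, a^(-(1/α)) * NVA.f α (((k:ℝ)+1) * a^(-(1/α))) := by
    intro a ha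
    have ha0 : (0:ℝ) < a := lt_of_lt_of_le one_pos ha
    set h := a ^ (-(1/α)) with hhdef
    have hpos : 0 < h := Real.rpow_pos_of_pos ha0 _
    have hstep : (∑' k : ℕ+, 1 / ((k:ℝ)^α + a)^2)
        = ∑' n : ℕ, 1 / (((n:ℝ)+1)^α + a)^2 := by
      rw [← Equiv.pnatEquivNat.symm.tsum_eq (fun k : ℕ+ => 1 / ((k:ℝ)^α + a)^2)]
      apply tsum_congr
      intro n
      have : ((Equiv.pnatEquivNat.symm n : ℕ+) : ℝ) = (n:ℝ) + 1 := by
        simp [Equiv.pnatEquivNat, Nat.succPNat]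
      rw [this]
    rw [hstep, ← tsum_mul_left]
    apply tsum_congr
    intro n
    have hb : (0:ℝ) < ((n:ℝ)+1) ^ α := Real.rpow_pos_of_pos (by positivity) α
    have hha : h ^ α = a⁻¹ := by
      rw [hhdef, ← Real.rpow_mul ha0.le]
      have : -(1/α) * α = -1 := by field_simp
      rw [this, Real.rpow_neg_one]
    have hmul : (((n:ℝ)+1) * h) ^ α = ((n:ℝ)+1)^α * a⁻¹ := by
      rw [Real.mul_rpow (by positivity) hpos.le, hha]
    have ha2 : a ^ (2 - 1/α) = a^2 * h := by
      rw [show (2 - 1/α) = 2 + (-(1/α)) by ring, Real.rpow_add ha0, hhdef]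
      norm_num [Real.rpow_two]
    rw [ha2]
    unfold NVA.f
    rw [hmul]
    have hne : ((n:ℝ)+1)^α + a ≠ 0 := by positivity
    field_simp
    ring
  have hF : Filter.Tendsto (fun a : ℝ => I - a ^ (-(1/α))) Filter.atTop (nhds I) := by
    have h0 : Filter.Tendsto (fun a : ℝ => a ^ (-(1/α))) Filter.atTop (nhds 0) :=
      tendsto_rpow_neg_atTop (by positivity)
    simpa using tendsto_const_nhds.sub h0
  apply tendsto_of_tendsto_of_tendsto_of_le_of_le' hF tendsto_const_nhds
  · filter_upwards [Filter.eventually_ge_atTop (1:ℝ)] with a ha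
    have ha0 : (0:ℝ) < a := lt_of_lt_of_le one_pos ha
    have hpos : 0 < a ^ (-(1/α)) := Real.rpow_pos_of_pos ha0 _
    rw [heq a ha]
    exact hIf ▸ (NVA.key hα hpos).1
  · filter_upwards [Filter.eventually_ge_atTop (1:ℝ)] with a ha
    have ha0 : (0:ℝ) < a := lt_of_lt_of_le one_pos ha
    have hpos : 0 < a ^ (-(1/α)) := Real.rpow_pos_of_pos ha0 _
    rw [heq a ha]
    exact hIf ▸ (NVA.key hα hpos).2
end

section
/- Let α > 1 and for each real n > 0 let z_n denote the unique positive real satisfying n = ∑_{k=1}^∞ 1/(1 + (z_n/n)·k^α). Then (1/n) ∑_{k=1}^∞ 1/(1 + (z_n/n)·k^α)² converges, as n → ∞, to the ratio (∫_0^∞ dx/(1+x^α)²)/(∫_0^∞ dx/(1+x^α)), and this limit is strictly less than 1. -/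
open MeasureTheory Filter Set Topology

namespace DenomAux

variable {g : ℝ → ℝ}

lemma const_mul_le_integral (hg : AntitoneOn g (Ici 0))
    (hint : IntegrableOn g (Ioi 0)) {a b : ℝ} (ha : 0 ≤ a) (hab : a ≤ b) :
    (b - a) * g b ≤ ∫ x in Ioc a b, g x := by
  have hsub : Ioc a b ⊆ Ioi 0 := fun x hx => lt_of_le_of_lt ha hx.1
  have hgi : IntegrableOn g (Ioc a b) := hint.mono_set hsub
  have h1 : ∫ _x in Ioc a b, g b ≤ ∫ x in Ioc a b, g x := by
    refine setIntegral_mono_on ?_ hgi measurableSet_Ioc (fun x hx => ?_)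
    · exact integrableOn_const measure_Ioc_lt_top.ne
    · exact hg (mem_Ici.mpr (le_trans ha hx.1.le)) (mem_Ici.mpr (le_trans ha hab)) hx.2
  have h2 : (∫ _x in Ioc a b, g b) = (b - a) * g b := by
    rw [setIntegral_const, Real.volume_real_Ioc_of_le hab,
      smul_eq_mul]
  linarith

lemma integral_le_const_mul (hg : AntitoneOn g (Ici 0))
    (hint : IntegrableOn g (Ioi 0)) {a b : ℝ} (ha : 0 ≤ a) (hab : a ≤ b) :
    (∫ x in Ioc a b, g x) ≤ (b - a) * g a := by
  have hsub : Ioc a b ⊆ Ioi 0 := fun x hx => lt_of_le_of_lt ha hx.1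
  have hgi : IntegrableOn g (Ioc a b) := hint.mono_set hsub
  have h1 : (∫ x in Ioc a b, g x) ≤ ∫ _x in Ioc a b, g a := by
    refine setIntegral_mono_on hgi ?_ measurableSet_Ioc (fun x hx => ?_)
    · exact integrableOn_const measure_Ioc_lt_top.ne
    · exact hg (mem_Ici.mpr ha) (mem_Ici.mpr (le_trans ha hx.1.le)) hx.1.le
  have h2 : (∫ _x in Ioc a b, g a) = (b - a) * g a := by
    rw [setIntegral_const, Real.volume_real_Ioc_of_le hab,
      smul_eq_mul]
  linarith


variable {g : ℝ → ℝ}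

lemma integral_Ioc_split (hint : IntegrableOn g (Ioi 0)) {a b c : ℝ}
    (ha : 0 ≤ a) (hab : a ≤ b) (hbc : b ≤ c) :
    ∫ x in Ioc a c, g x = (∫ x in Ioc a b, g x) + ∫ x in Ioc b c, g x := by
  have h1 : IntegrableOn g (Ioc a b) := hint.mono_set (fun x hx => lt_of_le_of_lt ha hx.1)
  have h2 : IntegrableOn g (Ioc b c) :=
    hint.mono_set (fun x hx => lt_of_le_of_lt (le_trans ha hab) hx.1)
  rw [← Set.Ioc_union_Ioc_eq_Ioc hab hbc,
    setIntegral_union (Set.Ioc_disjoint_Ioc_of_le le_rfl) measurableSet_Ioc h1 h2]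

lemma sum_le_integral_Ioc (hg : AntitoneOn g (Ici 0)) (hint : IntegrableOn g (Ioi 0))
    {h : ℝ} (hpos : 0 < h) (K : ℕ) :
    ∑ i ∈ Finset.range K, h * g (h * ((i : ℝ) + 1)) ≤ ∫ x in Ioc 0 (h * K), g x := by
  induction K with
  | zero => simp
  | succ K ih =>
    have hK : (0:ℝ) ≤ h * K := by positivity
    have hK1 : h * (K:ℝ) ≤ h * ((K+1:ℕ) : ℝ) := by
      push_cast; nlinarith
    rw [Finset.sum_range_succ, integral_Ioc_split hint le_rfl hK hK1]
    have hper : h * g (h * ((K:ℝ) + 1)) ≤ ∫ x in Ioc (h * K) (h * ((K+1:ℕ):ℝ)), g x := by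
      have hc : ((K+1:ℕ):ℝ) = (K:ℝ) + 1 := by push_cast; ring
      rw [hc]
      have hab : h * (K:ℝ) ≤ h * ((K:ℝ)+1) := by nlinarith [Nat.cast_nonneg (α:=ℝ) K]
      have := const_mul_le_integral hg hint hK hab
      have he : h * ((K:ℝ)+1) - h * K = h := by ring
      rw [he] at this; exact this
    exact add_le_add ih hper

lemma integral_Ioc_le_sum (hg : AntitoneOn g (Ici 0)) (hint : IntegrableOn g (Ioi 0))
    {h : ℝ} (hpos : 0 < h) (K : ℕ) :
    (∫ x in Ioc h (h * ((K:ℝ) + 1)), g x) ≤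
      ∑ i ∈ Finset.range K, h * g (h * ((i : ℝ) + 1)) := by
  induction K with
  | zero => simp
  | succ K ih =>
    have hK : (0:ℝ) ≤ h * ((K:ℝ) + 1) := by positivity
    have hh : h ≤ h * ((K:ℝ)+1) := by nlinarith [Nat.cast_nonneg (α := ℝ) K]
    have hK1 : h * ((K:ℝ) + 1) ≤ h * ((K+1:ℕ):ℝ) + h := by push_cast; nlinarith
    have hsplit : ∫ x in Ioc h (h * (((K+1:ℕ)):ℝ) + 1 * h), g x
        = (∫ x in Ioc h (h * ((K:ℝ) + 1)), g x)
          + ∫ x in Ioc (h * ((K:ℝ)+1)) (h * (((K+1:ℕ)):ℝ) + 1 * h), g x := by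
      apply integral_Ioc_split hint hpos.le hh
      push_cast; nlinarith
    have he : h * ((((K+1:ℕ)):ℝ) + 1) = h * (((K+1:ℕ)):ℝ) + 1 * h := by ring
    rw [Finset.sum_range_succ, he, hsplit]
    have hper : (∫ x in Ioc (h * ((K:ℝ)+1)) (h * (((K+1:ℕ)):ℝ) + 1 * h), g x)
        ≤ h * g (h * ((K:ℝ) + 1)) := by
      have hab : h * ((K:ℝ)+1) ≤ h * (((K+1:ℕ)):ℝ) + 1 * h := by push_cast; nlinarith
      have := integral_le_const_mul hg hint (by positivity : (0:ℝ) ≤ h * ((K:ℝ)+1)) hab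
      have he2 : h * (((K+1:ℕ)):ℝ) + 1 * h - h * ((K:ℝ)+1) = h := by push_cast; ring
      rw [he2] at this
      exact this
    exact add_le_add ih hper


lemma tsum_pnat_eq (f : ℕ+ → ℝ) : ∑' k : ℕ+, f k = ∑' n : ℕ, f n.succPNat :=
  (Equiv.pnatEquivNat.symm.tsum_eq f).symm

lemma summable_pnat_iff (f : ℕ+ → ℝ) :
    Summable (fun n : ℕ => f n.succPNat) ↔ Summable f :=
  Equiv.pnatEquivNat.symm.summable_iff

lemma succPNat_cast (n : ℕ) : ((n.succPNat : ℕ+) : ℝ) = (n : ℝ) + 1 := by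
  have : ((n.succPNat : ℕ+) : ℕ) = n + 1 := rfl
  push_cast [this]
  ring

lemma mul_tsum_le_integral (hg : AntitoneOn g (Ici 0)) (hg0 : ∀ x, 0 ≤ x → 0 ≤ g x)
    (hint : IntegrableOn g (Ioi 0)) {h : ℝ} (hpos : 0 < h) :
    h * ∑' k : ℕ+, g (h * k) ≤ ∫ x in Ioi 0, g x := by
  rw [← tsum_mul_left, tsum_pnat_eq]
  have hnn : ∀ᵐ x ∂(volume.restrict (Ioi (0:ℝ))), 0 ≤ g x :=
    (ae_restrict_iff' measurableSet_Ioi).mpr (ae_of_all _ fun x hx => hg0 x hx.le)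
  refine Real.tsum_le_of_sum_range_le (fun n => ?_) (fun K => ?_)
  · exact mul_nonneg hpos.le (hg0 _ (by positivity))
  · have h1 : ∑ i ∈ Finset.range K, h * g (h * ((i:ℝ) + 1)) ≤ ∫ x in Ioc 0 (h * K), g x :=
      sum_le_integral_Ioc hg hint hpos K
    have h2 : (∫ x in Ioc 0 (h * K), g x) ≤ ∫ x in Ioi 0, g x := by
      refine setIntegral_mono_set hint hnn ?_
      exact (HasSubset.Subset.eventuallyLE (fun x hx => hx.1))
    calc ∑ i ∈ Finset.range K, h * g (h * ((i.succPNat : ℕ+) : ℝ))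
        = ∑ i ∈ Finset.range K, h * g (h * ((i:ℝ) + 1)) := by
          refine Finset.sum_congr rfl fun i _ => by rw [succPNat_cast]
      _ ≤ _ := le_trans h1 h2

lemma integral_Ioi_le_mul_tsum (hg : AntitoneOn g (Ici 0)) (hg0 : ∀ x, 0 ≤ x → 0 ≤ g x)
    (hint : IntegrableOn g (Ioi 0)) {h : ℝ} (hpos : 0 < h)
    (hsum : Summable fun k : ℕ+ => g (h * k)) :
    (∫ x in Ioi h, g x) ≤ h * ∑' k : ℕ+, g (h * k) := by
  have hinth : IntegrableOn g (Ioi h) := hint.mono_set (Ioi_subset_Ioi hpos.le)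
  have hsumN : Summable (fun n : ℕ => g (h * ((n.succPNat : ℕ+) : ℝ))) :=
    (summable_pnat_iff _).mpr hsum
  have key : ∀ K : ℕ, (∫ x in Ioc h (h * ((K:ℝ) + 1)), g x) ≤ h * ∑' k : ℕ+, g (h * k) := by
    intro K
    refine le_trans (integral_Ioc_le_sum hg hint hpos K) ?_
    rw [← Finset.mul_sum, tsum_pnat_eq]
    refine mul_le_mul_of_nonneg_left ?_ hpos.le
    have := Summable.sum_le_tsum (Finset.range K)
      (fun n _ => hg0 _ (by positivity)) hsumN
    refine le_trans (le_of_eq ?_) this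
    refine Finset.sum_congr rfl fun i _ => by rw [succPNat_cast]
  have htend : Tendsto (fun K : ℕ => ∫ x in Ioc h (h * ((K:ℝ) + 1)), g x) atTop
      (𝓝 (∫ x in Ioi h, g x)) := by
    have hb : Tendsto (fun K : ℕ => h * ((K:ℝ) + 1)) atTop atTop := by
      apply Tendsto.const_mul_atTop hpos
      exact tendsto_atTop_add_const_right _ _ tendsto_natCast_atTop_atTop
    have := intervalIntegral_tendsto_integral_Ioi h hinth hb
    refine this.congr fun K => ?_
    rw [intervalIntegral.integral_of_le]
    nlinarith [Nat.cast_nonneg (α := ℝ) K]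
  exact le_of_tendsto htend (Eventually.of_forall key)

lemma integral_split_Ioi (hint : IntegrableOn g (Ioi 0)) {h : ℝ} (hpos : 0 < h) :
    ∫ x in Ioi 0, g x = (∫ x in Ioc 0 h, g x) + ∫ x in Ioi h, g x := by
  have h1 : IntegrableOn g (Ioc 0 h) := hint.mono_set (fun x hx => hx.1)
  have h2 : IntegrableOn g (Ioi h) := hint.mono_set (Ioi_subset_Ioi hpos.le)
  rw [← Set.Ioc_union_Ioi_eq_Ioi hpos.le,
    setIntegral_union (Set.Ioc_disjoint_Ioi le_rfl) measurableSet_Ioi h1 h2]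

lemma tendsto_mul_tsum (hg : AntitoneOn g (Ici 0)) (hg0 : ∀ x, 0 ≤ x → 0 ≤ g x)
    (hg1 : ∀ x, 0 ≤ x → g x ≤ 1) (hint : IntegrableOn g (Ioi 0)) {h : ℝ → ℝ}
    (hhpos : ∀ᶠ n in atTop, 0 < h n) (hh0 : Tendsto h atTop (𝓝 0))
    (hsum : ∀ᶠ n in atTop, Summable fun k : ℕ+ => g (h n * k)) :
    Tendsto (fun n : ℝ => h n * ∑' k : ℕ+, g (h n * k)) atTop (𝓝 (∫ x in Ioi 0, g x)) := by
  have hlo : ∀ᶠ n in atTop, (∫ x in Ioi 0, g x) - h n ≤ h n * ∑' k : ℕ+, g (h n * k) := by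
    filter_upwards [hhpos, hsum] with n hp hs
    have h1 := integral_Ioi_le_mul_tsum hg hg0 hint hp hs
    have h2 := integral_le_const_mul hg hint le_rfl hp.le
    have h3 : g 0 ≤ 1 := hg1 0 le_rfl
    have h4 := integral_split_Ioi hint hp
    nlinarith
  have hhi : ∀ᶠ n in atTop, h n * ∑' k : ℕ+, g (h n * k) ≤ ∫ x in Ioi 0, g x := by
    filter_upwards [hhpos] with n hp
    exact mul_tsum_le_integral hg hg0 hint hp
  have hl : Tendsto (fun n : ℝ => (∫ x in Ioi 0, g x) - h n) atTop
      (𝓝 (∫ x in Ioi 0, g x)) := by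
    simpa using tendsto_const_nhds.sub hh0
  exact tendsto_of_tendsto_of_tendsto_of_le_of_le' hl tendsto_const_nhds hlo hhi

section G

variable {α : ℝ} (hα : 1 < α)

lemma denom_pos {x : ℝ} (hx : 0 ≤ x) : 0 < 1 + x ^ α := by
  have := Real.rpow_nonneg hx α
  linarith

include hα

lemma antitone_g1 : AntitoneOn (fun x : ℝ => 1 / (1 + x ^ α)) (Ici 0) := by
  intro x hx y hy hxy
  have hx0 : (0:ℝ) ≤ x := hx
  have hy0 : (0:ℝ) ≤ y := hy
  have h1 : x ^ α ≤ y ^ α := Real.rpow_le_rpow hx0 hxy (by linarith)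
  have h2 := denom_pos (α := α) hx0
  have h3 := denom_pos (α := α) hy0
  exact one_div_le_one_div_of_le h2 (by linarith)

lemma antitone_g2 : AntitoneOn (fun x : ℝ => 1 / (1 + x ^ α) ^ 2) (Ici 0) := by
  intro x hx y hy hxy
  have hx0 : (0:ℝ) ≤ x := hx
  have hy0 : (0:ℝ) ≤ y := hy
  have h1 : x ^ α ≤ y ^ α := Real.rpow_le_rpow hx0 hxy (by linarith)
  have h2 := denom_pos (α := α) hx0
  have h3 := denom_pos (α := α) hy0
  have : (1 + x ^ α) ^ 2 ≤ (1 + y ^ α) ^ 2 := by nlinarith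
  exact one_div_le_one_div_of_le (by positivity) this

lemma g1_nonneg : ∀ x : ℝ, 0 ≤ x → 0 ≤ 1 / (1 + x ^ α) := fun x hx =>
  le_of_lt (by positivity)

lemma g1_le_one : ∀ x : ℝ, 0 ≤ x → 1 / (1 + x ^ α) ≤ 1 := by
  intro x hx
  rw [div_le_one (denom_pos hx)]
  have := Real.rpow_nonneg hx α
  linarith

lemma g2_nonneg : ∀ x : ℝ, 0 ≤ x → 0 ≤ 1 / (1 + x ^ α) ^ 2 := fun x hx =>
  le_of_lt (by have := denom_pos (α := α) hx; positivity)

lemma g2_le_g1 : ∀ x : ℝ, 0 ≤ x → 1 / (1 + x ^ α) ^ 2 ≤ 1 / (1 + x ^ α) := by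
  intro x hx
  have h2 := denom_pos (α := α) hx
  have hd : 1 + x ^ α ≤ (1 + x ^ α) ^ 2 := by nlinarith [Real.rpow_nonneg hx α]
  exact one_div_le_one_div_of_le h2 hd

lemma g2_le_one : ∀ x : ℝ, 0 ≤ x → 1 / (1 + x ^ α) ^ 2 ≤ 1 := fun x hx =>
  le_trans (g2_le_g1 hα x hx) (g1_le_one hα x hx)

lemma contOn_g1 : ContinuousOn (fun x : ℝ => 1 / (1 + x ^ α)) (Ioi 0) := by
  apply ContinuousOn.div continuousOn_const
  · exact continuousOn_const.add
      ((Real.continuous_rpow_const (by linarith)).continuousOn)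
  · exact fun x hx => ne_of_gt (denom_pos (le_of_lt hx))

lemma contOn_g2 : ContinuousOn (fun x : ℝ => 1 / (1 + x ^ α) ^ 2) (Ioi 0) := by
  apply ContinuousOn.div continuousOn_const
  · exact (continuousOn_const.add
      ((Real.continuous_rpow_const (by linarith)).continuousOn)).pow 2
  · exact fun x hx => ne_of_gt (by have := denom_pos (α := α) (le_of_lt hx); positivity)

lemma integrable_g1 : IntegrableOn (fun x : ℝ => 1 / (1 + x ^ α)) (Ioi 0) := by
  have hm : AEStronglyMeasurable (fun x : ℝ => 1 / (1 + x ^ α))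
      (volume.restrict (Ioi 0)) :=
    (contOn_g1 hα).aestronglyMeasurable measurableSet_Ioi
  have h01 : IntegrableOn (fun x : ℝ => 1 / (1 + x ^ α)) (Ioc 0 1) := by
    have hc : IntegrableOn (fun _ : ℝ => (1:ℝ)) (Ioc 0 1) :=
      integrableOn_const measure_Ioc_lt_top.ne
    refine Integrable.mono hc
      (hm.mono_measure (Measure.restrict_mono Ioc_subset_Ioi_self le_rfl)) ?_
    refine (ae_restrict_iff' measurableSet_Ioc).mpr (ae_of_all _ fun x hx => ?_)
    rw [Real.norm_eq_abs, Real.norm_eq_abs, abs_of_nonneg (g1_nonneg hα x hx.1.le), abs_one]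
    exact g1_le_one hα x hx.1.le
  have h1i : IntegrableOn (fun x : ℝ => 1 / (1 + x ^ α)) (Ioi 1) := by
    refine Integrable.mono (integrableOn_Ioi_rpow_of_lt (a := -α) (by linarith) one_pos)
      (hm.mono_measure (Measure.restrict_mono (Ioi_subset_Ioi zero_le_one) le_rfl)) ?_
    refine (ae_restrict_iff' measurableSet_Ioi).mpr (ae_of_all _ fun x hx => ?_)
    have hx0 : (0:ℝ) < x := lt_trans one_pos hx
    have hxa : (0:ℝ) < x ^ α := Real.rpow_pos_of_pos hx0 α
    rw [Real.norm_eq_abs, Real.norm_eq_abs, abs_of_nonneg (g1_nonneg hα x hx0.le),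
      abs_of_nonneg (Real.rpow_nonneg hx0.le _), Real.rpow_neg hx0.le]
    rw [one_div, inv_le_inv₀ (by linarith) hxa]
    linarith
  have := h01.union h1i
  rwa [Set.Ioc_union_Ioi_eq_Ioi zero_le_one] at this

lemma integrable_g2 : IntegrableOn (fun x : ℝ => 1 / (1 + x ^ α) ^ 2) (Ioi 0) := by
  refine Integrable.mono (integrable_g1 hα)
    ((contOn_g2 hα).aestronglyMeasurable measurableSet_Ioi) ?_
  refine (ae_restrict_iff' measurableSet_Ioi).mpr (ae_of_all _ fun x hx => ?_)
  rw [Real.norm_eq_abs, Real.norm_eq_abs, abs_of_nonneg (g2_nonneg hα x hx.le),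
    abs_of_nonneg (g1_nonneg hα x hx.le)]
  exact g2_le_g1 hα x hx.le

lemma summable_shift_rpow : Summable (fun n : ℕ => ((n:ℝ) + 1) ^ (-α)) := by
  have h0 : Summable (fun n : ℕ => (n:ℝ) ^ (-α)) :=
    Real.summable_nat_rpow.mpr (by linarith)
  have h1 := h0.comp_injective Nat.succ_injective
  refine h1.congr fun n => ?_
  simp only [Function.comp_apply]
  push_cast
  ring_nf

lemma summable_krpow : Summable (fun k : ℕ+ => (k:ℝ) ^ (-α)) := by
  rw [← summable_pnat_iff]
  refine (summable_shift_rpow hα).congr fun n => ?_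
  rw [succPNat_cast]

lemma summable_g1 {c : ℝ} (hc : 0 < c) :
    Summable (fun k : ℕ+ => 1 / (1 + c * (k:ℝ) ^ α)) := by
  rw [← summable_pnat_iff]
  refine Summable.of_nonneg_of_le (fun n => ?_) (fun n => ?_)
    ((summable_shift_rpow hα).mul_left (1/c))
  · have h1 : (0:ℝ) ≤ ((n.succPNat : ℕ+) : ℝ) := by positivity
    have h2 : (0:ℝ) ≤ ((n.succPNat : ℕ+) : ℝ) ^ α := Real.rpow_nonneg h1 α
    positivity
  · rw [succPNat_cast]
    set t : ℝ := (n:ℝ) + 1 with ht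
    have ht0 : (0:ℝ) < t := by positivity
    have hta : (0:ℝ) < t ^ α := Real.rpow_pos_of_pos ht0 α
    rw [Real.rpow_neg ht0.le]
    rw [show (1/c) * (t ^ α)⁻¹ = 1 / (c * t ^ α) by field_simp]
    exact one_div_le_one_div_of_le (by positivity) (by nlinarith)

lemma summable_g2 {c : ℝ} (hc : 0 < c) :
    Summable (fun k : ℕ+ => 1 / (1 + c * (k:ℝ) ^ α) ^ 2) := by
  refine Summable.of_nonneg_of_le (fun k => ?_) (fun k => ?_) (summable_g1 hα hc)
  · have h2 : (0:ℝ) ≤ (k : ℝ) ^ α := Real.rpow_nonneg (by positivity) α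
    positivity
  · have h2 : (0:ℝ) ≤ (k : ℝ) ^ α := Real.rpow_nonneg (by positivity) α
    have hd : (1:ℝ) ≤ 1 + c * (k:ℝ) ^ α := by nlinarith
    have : 1 + c * (k:ℝ) ^ α ≤ (1 + c * (k:ℝ) ^ α) ^ 2 := by nlinarith
    exact one_div_le_one_div_of_le (by linarith) this

lemma I2_lt_I1 :
    (∫ x in Ioi (0:ℝ), 1 / (1 + x ^ α) ^ 2) < ∫ x in Ioi (0:ℝ), 1 / (1 + x ^ α) := by
  have hint1 := integrable_g1 hα
  have hint2 := integrable_g2 hα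
  have hD : (0:ℝ) < 1 + (2:ℝ) ^ α := by
    have := Real.rpow_pos_of_pos (by norm_num : (0:ℝ) < 2) α; linarith
  set D : ℝ := 1 + (2:ℝ) ^ α with hDdef
  set ε : ℝ := 1 / (2 * D) with hε
  have hε0 : 0 < ε := by positivity
  have hd : IntegrableOn (fun x : ℝ => 1 / (1 + x ^ α) - 1 / (1 + x ^ α) ^ 2) (Ioi 0) :=
    hint1.sub hint2
  have hstep1 : ε ≤ ∫ x in Ioc (1:ℝ) 2, (1 / (1 + x ^ α) - 1 / (1 + x ^ α) ^ 2) := by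
    have hci : IntegrableOn (fun _ : ℝ => ε) (Ioc (1:ℝ) 2) :=
      integrableOn_const measure_Ioc_lt_top.ne
    have hdi : IntegrableOn (fun x : ℝ => 1 / (1 + x ^ α) - 1 / (1 + x ^ α) ^ 2)
        (Ioc (1:ℝ) 2) := hd.mono_set (fun x hx => lt_trans one_pos hx.1)
    have hmono : ∫ _x in Ioc (1:ℝ) 2, ε ≤
        ∫ x in Ioc (1:ℝ) 2, (1 / (1 + x ^ α) - 1 / (1 + x ^ α) ^ 2) := by
      refine setIntegral_mono_on hci hdi measurableSet_Ioc (fun x hx => ?_)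
      have hx1 : (1:ℝ) ≤ x := hx.1.le
      have hx0 : (0:ℝ) ≤ x := by linarith
      have h1 : (1:ℝ) ≤ x ^ α := by
        have := Real.rpow_le_rpow zero_le_one hx1 (by linarith : (0:ℝ) ≤ α)
        rwa [Real.one_rpow] at this
      have h2 : x ^ α ≤ (2:ℝ) ^ α :=
        Real.rpow_le_rpow hx0 hx.2 (by linarith)
      set d : ℝ := 1 + x ^ α with hddef
      have hd2 : (2:ℝ) ≤ d := by simp [hddef]; linarith
      have hdD : d ≤ D := by simp [hddef, hDdef]; linarith
      have he : 1 / d - 1 / d ^ 2 = (d - 1) / d ^ 2 := by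
        field_simp
      rw [he, hε, div_le_div_iff₀ (by positivity) (by positivity)]
      nlinarith [mul_le_mul_of_nonneg_left hdD (by linarith : (0:ℝ) ≤ 2 * (d - 1))]
    have hconst : (∫ _x in Ioc (1:ℝ) 2, ε) = ε := by
      rw [setIntegral_const, Real.volume_real_Ioc, smul_eq_mul]
      norm_num
    linarith
  have hstep2 : (∫ x in Ioc (1:ℝ) 2, (1 / (1 + x ^ α) - 1 / (1 + x ^ α) ^ 2)) ≤
      ∫ x in Ioi (0:ℝ), (1 / (1 + x ^ α) - 1 / (1 + x ^ α) ^ 2) := by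
    refine setIntegral_mono_set hd ?_
      (HasSubset.Subset.eventuallyLE (fun x hx => lt_trans one_pos hx.1))
    refine (ae_restrict_iff' measurableSet_Ioi).mpr (ae_of_all _ fun x hx => ?_)
    have := g2_le_g1 hα x hx.le
    simp only [Pi.zero_apply]
    linarith
  have hsub : (∫ x in Ioi (0:ℝ), (1 / (1 + x ^ α) - 1 / (1 + x ^ α) ^ 2)) =
      (∫ x in Ioi (0:ℝ), 1 / (1 + x ^ α)) - ∫ x in Ioi (0:ℝ), 1 / (1 + x ^ α) ^ 2 :=
    integral_sub hint1 hint2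
  linarith

lemma I1_pos : (0:ℝ) < ∫ x in Ioi (0:ℝ), 1 / (1 + x ^ α) := by
  have hint1 := integrable_g1 hα
  have h1 := const_mul_le_integral (antitone_g1 hα) hint1 (le_refl (0:ℝ)) zero_le_one
  have h2 : (∫ x in Ioc (0:ℝ) 1, 1 / (1 + x ^ α)) ≤ ∫ x in Ioi (0:ℝ), 1 / (1 + x ^ α) := by
    refine setIntegral_mono_set hint1 ?_ (HasSubset.Subset.eventuallyLE (fun x hx => hx.1))
    exact (ae_restrict_iff' measurableSet_Ioi).mpr
      (ae_of_all _ fun x hx => g1_nonneg hα x hx.le)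
  have h3 : (0:ℝ) < (1 - 0) * (1 / (1 + (1:ℝ) ^ α)) := by
    rw [Real.one_rpow]
    norm_num
  linarith

lemma g1_le_dom {c : ℝ} (hc : 0 < c) (k : ℕ+) :
    1 / (1 + c * (k:ℝ) ^ α) ≤ (1/c) * (k:ℝ) ^ (-α) := by
  have ht0 : (0:ℝ) < (k:ℝ) := by positivity
  have hta : (0:ℝ) < (k:ℝ) ^ α := Real.rpow_pos_of_pos ht0 α
  rw [Real.rpow_neg ht0.le, show (1/c) * ((k:ℝ) ^ α)⁻¹ = 1 / (c * (k:ℝ) ^ α) by field_simp]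
  exact one_div_le_one_div_of_le (by positivity) (by nlinarith)

omit hα in
lemma rpow_scale (hα : 1 < α) {c : ℝ} (hc : 0 < c) {x : ℝ} (hx : 0 ≤ x) :
    (c ^ (1/α) * x) ^ α = c * x ^ α := by
  have hα0 : α ≠ 0 := by intro h; rw [h] at hα; linarith
  rw [Real.mul_rpow (Real.rpow_nonneg hc.le _) hx, ← Real.rpow_mul hc.le,
    one_div_mul_cancel hα0, Real.rpow_one]

end G

end DenomAux

open DenomAux

/-- For α > 1, with `z n` the (unique) positive solution of
`n = ∑_{k≥1} 1/(1+(z n/n)k^α)` for every n > 0, the quantity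
`(1/n)∑_{k≥1} 1/(1+(z n/n)k^α)²` converges, as n → ∞, to
`(∫_0^∞ dx/(1+x^α)²)/(∫_0^∞ dx/(1+x^α))`, and this limit is strictly less than 1. -/
theorem denominator_bounded_away_from_one (α : ℝ) (hα : 1 < α) (z : ℝ → ℝ)
    (hz : ∀ n : ℝ, 0 < n →
      0 < z n ∧ n = ∑' k : ℕ+, 1 / (1 + (z n / n) * (k : ℝ) ^ α)) :
    Filter.Tendsto
      (fun n : ℝ => (1 / n) * ∑' k : ℕ+, 1 / (1 + (z n / n) * (k : ℝ) ^ α) ^ 2)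
      Filter.atTop
      (nhds ((∫ x in Set.Ioi (0 : ℝ), 1 / (1 + x ^ α) ^ 2)
        / (∫ x in Set.Ioi (0 : ℝ), 1 / (1 + x ^ α)))) ∧
    (∫ x in Set.Ioi (0 : ℝ), 1 / (1 + x ^ α) ^ 2)
        / (∫ x in Set.Ioi (0 : ℝ), 1 / (1 + x ^ α)) < 1 := by
  have hα0 : α ≠ 0 := by intro h; rw [h] at hα; linarith
  set c : ℝ → ℝ := fun n => z n / n with hcdef
  set h : ℝ → ℝ := fun n => (c n) ^ (1/α) with hhdef
  set Z : ℝ := ∑' k : ℕ+, (k:ℝ) ^ (-α) with hZdef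
  have hZ0 : 0 ≤ Z := tsum_nonneg fun k => Real.rpow_nonneg (by positivity) _
  -- basic facts for n ≥ 1
  have hcpos : ∀ n : ℝ, 1 ≤ n → 0 < c n := by
    intro n hn
    have hn0 : (0:ℝ) < n := by linarith
    exact div_pos (hz n hn0).1 hn0
  have hhpos : ∀ n : ℝ, 1 ≤ n → 0 < h n := fun n hn =>
    Real.rpow_pos_of_pos (hcpos n hn) _
  have hrw1 : ∀ n : ℝ, 1 ≤ n → (fun k : ℕ+ => 1 / (1 + (h n * (k:ℝ)) ^ α))
      = fun k : ℕ+ => 1 / (1 + c n * (k:ℝ) ^ α) := by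
    intro n hn
    funext k
    rw [rpow_scale hα (hcpos n hn) (by positivity : (0:ℝ) ≤ (k:ℝ))]
  have hrw2 : ∀ n : ℝ, 1 ≤ n → (fun k : ℕ+ => 1 / (1 + (h n * (k:ℝ)) ^ α) ^ 2)
      = fun k : ℕ+ => 1 / (1 + c n * (k:ℝ) ^ α) ^ 2 := by
    intro n hn
    funext k
    rw [rpow_scale hα (hcpos n hn) (by positivity : (0:ℝ) ≤ (k:ℝ))]
  -- c n ≤ Z / n for n ≥ 1
  have hcle : ∀ n : ℝ, 1 ≤ n → c n ≤ Z / n := by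
    intro n hn
    have hn0 : (0:ℝ) < n := by linarith
    have hc := hcpos n hn
    have hle : n ≤ (1/(c n)) * Z := by
      have h1 := (hz n hn0).2
      have h2 : ∑' k : ℕ+, 1 / (1 + c n * (k:ℝ) ^ α)
          ≤ ∑' k : ℕ+, (1/(c n)) * (k:ℝ) ^ (-α) := by
        refine Summable.tsum_le_tsum (fun k => g1_le_dom hα hc k) (summable_g1 hα hc)
          ((summable_krpow hα).mul_left _)
      rw [tsum_mul_left] at h2
      calc n = ∑' k : ℕ+, 1 / (1 + c n * (k:ℝ) ^ α) := h1
        _ ≤ _ := h2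
    rw [le_div_iff₀ hn0]
    have hcc : c n * (1/(c n) * Z) = Z := by field_simp
    nlinarith [mul_le_mul_of_nonneg_left hle hc.le]
  -- h → 0
  have hh0 : Tendsto h atTop (𝓝 0) := by
    have hup : Tendsto (fun n : ℝ => (Z/n) ^ (1/α)) atTop (𝓝 0) := by
      have h1 : Tendsto (fun n : ℝ => Z/n) atTop (𝓝 0) :=
        tendsto_const_nhds.div_atTop tendsto_id
      have h2 := h1.rpow_const (Or.inr (by positivity : (0:ℝ) ≤ 1/α))
      rwa [Real.zero_rpow (one_div_ne_zero hα0)] at h2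
    refine squeeze_zero' ?_ ?_ hup
    · filter_upwards [eventually_ge_atTop 1] with n hn
      exact (hhpos n hn).le
    · filter_upwards [eventually_ge_atTop 1] with n hn
      exact Real.rpow_le_rpow (hcpos n hn).le (hcle n hn) (by positivity)
  have hepos : ∀ᶠ n : ℝ in atTop, 0 < h n := by
    filter_upwards [eventually_ge_atTop 1] with n hn using hhpos n hn
  -- the two tendsto facts
  have key1 : Tendsto (fun n : ℝ => h n * ∑' k : ℕ+, 1 / (1 + (h n * (k:ℝ)) ^ α))
      atTop (𝓝 (∫ x in Ioi (0:ℝ), 1 / (1 + x ^ α))) := by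
    refine tendsto_mul_tsum (antitone_g1 hα) (g1_nonneg hα) (g1_le_one hα)
      (integrable_g1 hα) hepos hh0 ?_
    filter_upwards [eventually_ge_atTop 1] with n hn
    rw [hrw1 n hn]
    exact summable_g1 hα (hcpos n hn)
  have key2 : Tendsto (fun n : ℝ => h n * ∑' k : ℕ+, 1 / (1 + (h n * (k:ℝ)) ^ α) ^ 2)
      atTop (𝓝 (∫ x in Ioi (0:ℝ), 1 / (1 + x ^ α) ^ 2)) := by
    refine tendsto_mul_tsum (antitone_g2 hα) (g2_nonneg hα) (g2_le_one hα)
      (integrable_g2 hα) hepos hh0 ?_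
    filter_upwards [eventually_ge_atTop 1] with n hn
    rw [hrw2 n hn]
    exact summable_g2 hα (hcpos n hn)
  have hI1pos := I1_pos hα
  have hdiv := key2.div key1 (ne_of_gt hI1pos)
  constructor
  · refine hdiv.congr' ?_
    filter_upwards [eventually_ge_atTop 1] with n hn
    have hn0 : (0:ℝ) < n := by linarith
    have hhn := hhpos n hn
    have hT1 : (∑' k : ℕ+, 1 / (1 + (h n * (k:ℝ)) ^ α)) = n := by
      rw [hrw1 n hn]; exact ((hz n hn0).2).symm
    simp only [Pi.div_apply]
    rw [hT1, hrw2 n hn]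
    simp only [hcdef]
    field_simp
  · rw [div_lt_one hI1pos]
    exact I2_lt_I1 hα
end

section
/- Let α > 1, r > 0 with r ≠ 1, 0 < ℓ < α, and σ ≥ 0. For real n > 1 define N₁(n) := ∑_{k=1}^∞ k^{−1−2rα}/(1 + n^{ℓ}·k^{−α})², N₂(n) := n^{2ℓ−1} ∑_{k=1}^∞ k^{−2α}/(1 + n^{ℓ}·k^{−α})², and ε(n) := (N₁(n) + σ²·N₂(n))/(1 − N₂(n)). Then ε(n) = Θ(n^{−2ℓ·min(r,1)} + σ²·n^{(ℓ−α)/α}) as n → ∞; that is, there exist constants 0 < c ≤ C and n₀ such that for all n ≥ n₀, c·(n^{−2ℓ·min(r,1)} + σ²·n^{(ℓ−α)/α}) ≤ ε(n) ≤ C·(n^{−2ℓ·min(r,1)} + σ²·n^{(ℓ−α)/α}). -/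
open Real Finset

section Helpers

lemma tail_step {s m : ℝ} (hs : 1 < s) (hm : 2 ≤ m) :
    (s - 1) * m ^ (-s) ≤ (m - 1) ^ (1 - s) - m ^ (1 - s) := by
  have hm0 : (0:ℝ) < m := by linarith
  have hv0 : (0:ℝ) < 1/m := by positivity
  have hvle : 1/m ≤ 1/2 := by
    rw [div_le_div_iff₀ hm0 (by norm_num)]; linarith
  set v : ℝ := 1/m with hv
  have h1v : (0:ℝ) < 1 - v := by linarith
  have key : 1 + (s - 1) * v ≤ (1 - v) ^ (1 - s) := by
    rcases le_or_gt s 2 with hs2 | hs2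
    · have hb : (1 - v) ^ (s-1) ≤ 1 - (s-1) * v := by
        have := rpow_one_add_le_one_add_mul_self (s := -v) (by linarith) (p := s-1)
          (by linarith) (by linarith)
        simpa [mul_neg, sub_eq_add_neg] using this
      have hq : 0 < 1 - (s-1)*v := by nlinarith
      have hpow : (0:ℝ) < (1 - v) ^ (s-1) := Real.rpow_pos_of_pos h1v _
      have hinv : (1 - (s-1)*v)⁻¹ ≤ ((1 - v) ^ (s-1))⁻¹ := by
        exact inv_anti₀ hpow hb
      have h2 : 1 + (s-1)*v ≤ (1 - (s-1)*v)⁻¹ := by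
        rw [inv_eq_one_div, le_div_iff₀ hq]; nlinarith [sq_nonneg ((s-1)*v)]
      calc 1 + (s-1)*v ≤ (1 - (s-1)*v)⁻¹ := h2
        _ ≤ ((1 - v) ^ (s-1))⁻¹ := hinv
        _ = (1 - v) ^ (1 - s) := by
            rw [← Real.rpow_neg h1v.le]; ring_nf
    · have hw : v ≤ v / (1 - v) := by
        rw [le_div_iff₀ h1v]; nlinarith
      have hvv : (0:ℝ) ≤ v/(1-v) := by positivity
      have hb := one_add_mul_self_le_rpow_one_add (s := v/(1-v))
        (by linarith) (p := s-1) (by linarith)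
      have e1 : (1 + v/(1-v)) = (1-v)⁻¹ := by
        refine eq_inv_of_mul_eq_one_left ?_
        field_simp; ring
      have e2 : ((1-v)⁻¹) ^ (s-1) = (1-v) ^ (1-s) := by
        rw [Real.inv_rpow h1v.le, ← Real.rpow_neg h1v.le]
        congr 1; ring
      have h1 : 1 + (s-1)*v ≤ (1 + v/(1-v))^(s-1) := by
        refine le_trans ?_ hb
        have : 0 ≤ s - 1 := by linarith
        nlinarith
      calc 1 + (s-1)*v ≤ (1 + v/(1-v))^(s-1) := h1
        _ = ((1-v)⁻¹) ^ (s-1) := by rw [e1]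
        _ = (1-v) ^ (1-s) := e2
  have hmul : (m - 1) = m * (1 - v) := by
    rw [hv, mul_sub, mul_one, mul_one_div, div_self hm0.ne']
  have hmp : (0:ℝ) < m ^ (1-s) := Real.rpow_pos_of_pos hm0 _
  have hrw : (m-1) ^ (1-s) = m ^ (1-s) * (1-v) ^ (1-s) := by
    rw [hmul, Real.mul_rpow hm0.le h1v.le]
  have hstep : m ^ (1-s) * (1 + (s-1)*v) ≤ (m-1) ^ (1-s) := by
    rw [hrw]
    exact mul_le_mul_of_nonneg_left key hmp.le
  have hms : m ^ (1-s) * v = m ^ (-s) := by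
    have h1 : (1:ℝ)/m = m ^ (-1:ℝ) := by
      rw [Real.rpow_neg hm0.le, Real.rpow_one, one_div]
    rw [hv, h1, ← Real.rpow_add hm0]
    congr 1; ring
  nlinarith [hstep, hms]

lemma head_step {q x : ℝ} (hq0 : 0 < q) (hq1 : q ≤ 1) (hx : 0 ≤ x) :
    q * (x+1) ^ (q-1) ≤ (x+1) ^ q - x ^ q := by
  have hx1 : (0:ℝ) < x + 1 := by linarith
  set u : ℝ := 1/(x+1) with hu
  have hu0 : 0 < u := by positivity
  have hu1 : u ≤ 1 := by
    rw [hu, div_le_one hx1]; linarith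
  have hb : (1 - u) ^ q ≤ 1 - q * u := by
    have := rpow_one_add_le_one_add_mul_self (s := -u) (by linarith) (p := q)
      hq0.le hq1
    simpa [mul_neg, sub_eq_add_neg] using this
  have hxu : x = (x+1) * (1-u) := by
    rw [hu, mul_sub, mul_one, mul_one_div, div_self hx1.ne']; ring
  have h1u : (0:ℝ) ≤ 1 - u := by linarith
  have hxq : x ^ q ≤ (x+1) ^ q * (1 - q*u) := by
    calc x ^ q = (x+1) ^ q * (1-u) ^ q := by
          rw [← Real.mul_rpow hx1.le h1u, ← hxu]
      _ ≤ (x+1) ^ q * (1 - q*u) :=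
          mul_le_mul_of_nonneg_left hb (Real.rpow_pos_of_pos hx1 q).le
  have hpow : (x+1) ^ q * u = (x+1) ^ (q-1) := by
    have h1 : u = (x+1) ^ (-1:ℝ) := by
      rw [Real.rpow_neg hx1.le, Real.rpow_one, hu, one_div]
    rw [h1, ← Real.rpow_add hx1, ← sub_eq_add_neg]
  nlinarith [hxq, hpow, Real.rpow_pos_of_pos hx1 q]

lemma head_sum_le {E : ℝ} (hE : -1 < E) (K : ℕ) :
    ∑ n ∈ range K, ((n:ℝ)+1) ^ E ≤ (1 + 1/(E+1)) * (K:ℝ) ^ (E+1) := by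
  have hq0 : 0 < E + 1 := by linarith
  rcases Nat.eq_zero_or_pos K with rfl | hK
  · simp
    positivity
  have hKR : (1:ℝ) ≤ (K:ℝ) := by exact_mod_cast hK
  rcases le_or_gt 0 E with hE0 | hE0
  · -- E ≥ 0 : bound each term by K^E
    have : ∑ n ∈ range K, ((n:ℝ)+1) ^ E ≤ ∑ _n ∈ range K, (K:ℝ) ^ E := by
      refine Finset.sum_le_sum fun n hn => ?_
      refine Real.rpow_le_rpow (by positivity) ?_ hE0
      have := Finset.mem_range.mp hn
      have : (n:ℝ) + 1 ≤ (K:ℝ) := by exact_mod_cast this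
      linarith
    refine le_trans this ?_
    rw [Finset.sum_const, Finset.card_range, nsmul_eq_mul]
    have hKE : (K:ℝ) * (K:ℝ) ^ E = (K:ℝ) ^ (E+1) := by
      nth_rewrite 1 [← Real.rpow_one (K:ℝ)]
      rw [← Real.rpow_add (by linarith)]
      congr 1; ring
    rw [hKE]
    have : (0:ℝ) ≤ (K:ℝ) ^ (E+1) := by positivity
    nlinarith [one_div_pos.mpr hq0]
  · -- -1 < E < 0 : telescoping
    have hterm : ∀ n : ℕ, ((n:ℝ)+1) ^ E ≤ (((n:ℝ)+1) ^ (E+1) - (n:ℝ) ^ (E+1)) / (E+1) := by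
      intro n
      rw [le_div_iff₀ hq0]
      have := head_step (q := E+1) hq0 (by linarith) (x := (n:ℝ)) (by positivity)
      calc ((n:ℝ)+1) ^ E * (E+1) = (E+1) * ((n:ℝ)+1) ^ ((E+1)-1) := by
            rw [mul_comm]; congr 2; ring
        _ ≤ ((n:ℝ)+1) ^ (E+1) - (n:ℝ) ^ (E+1) := this
    calc ∑ n ∈ range K, ((n:ℝ)+1) ^ E
        ≤ ∑ n ∈ range K, ((((n:ℝ)+1) ^ (E+1) - (n:ℝ) ^ (E+1)) / (E+1)) :=
          Finset.sum_le_sum fun n _ => hterm n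
      _ = (∑ n ∈ range K, ((((n+1:ℕ)):ℝ) ^ (E+1) - ((n:ℕ):ℝ) ^ (E+1))) / (E+1) := by
          rw [← Finset.sum_div]
          congr 1
          refine Finset.sum_congr rfl fun n _ => ?_
          push_cast; ring_nf
      _ = ((K:ℝ) ^ (E+1) - ((0:ℕ):ℝ) ^ (E+1)) / (E+1) := by
          rw [Finset.sum_range_sub (fun n => ((n:ℕ):ℝ) ^ (E+1))]
      _ ≤ (1 + 1/(E+1)) * (K:ℝ) ^ (E+1) := by
          rw [Nat.cast_zero, Real.zero_rpow hq0.ne', sub_zero, div_eq_mul_one_div, mul_comm]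
          have : (0:ℝ) ≤ (K:ℝ) ^ (E+1) := by positivity
          nlinarith


lemma summable_shift {c : ℝ} (hc : c < -1) :
    Summable (fun n : ℕ => ((n:ℝ)+1) ^ c) := by
  have h := (Real.summable_nat_rpow (p := c)).mpr hc
  have h2 := (summable_nat_add_iff (f := fun n : ℕ => ((n:ℕ):ℝ) ^ c) 1).mpr h
  refine h2.congr fun n => ?_
  push_cast
  rfl

lemma tail_sum_le {s : ℝ} (hs : 1 < s) (K : ℕ) (hK : 1 ≤ K) :
    ∑' i : ℕ, ((i:ℝ)+(K:ℝ)+1) ^ (-s) ≤ (K:ℝ) ^ (1-s) / (s-1) := by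
  have hs1 : 0 < s - 1 := by linarith
  have hKR : (1:ℝ) ≤ (K:ℝ) := by exact_mod_cast hK
  refine Real.tsum_le_of_sum_range_le (fun n => by positivity) fun N => ?_
  have hterm : ∀ i : ℕ, ((i:ℝ)+(K:ℝ)+1) ^ (-s) ≤
      (((i:ℝ)+(K:ℝ)) ^ (1-s) - (((i+1:ℕ):ℝ)+(K:ℝ)) ^ (1-s)) / (s-1) := by
    intro i
    rw [le_div_iff₀ hs1]
    have h2 : (2:ℝ) ≤ (i:ℝ)+(K:ℝ)+1 := by
      have : (0:ℝ) ≤ (i:ℝ) := by positivity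
      linarith
    have := tail_step hs h2
    push_cast
    calc ((i:ℝ)+(K:ℝ)+1) ^ (-s) * (s-1) = (s-1) * ((i:ℝ)+(K:ℝ)+1) ^ (-s) := by ring
      _ ≤ ((i:ℝ)+(K:ℝ)+1-1) ^ (1-s) - ((i:ℝ)+(K:ℝ)+1) ^ (1-s) := this
      _ = ((i:ℝ)+(K:ℝ)) ^ (1-s) - ((i:ℝ)+1+(K:ℝ)) ^ (1-s) := by ring_nf
  calc ∑ i ∈ range N, ((i:ℝ)+(K:ℝ)+1) ^ (-s)
      ≤ ∑ i ∈ range N, ((((i:ℕ):ℝ)+(K:ℝ)) ^ (1-s) - (((i+1:ℕ):ℝ)+(K:ℝ)) ^ (1-s)) / (s-1) :=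
        Finset.sum_le_sum fun i _ => hterm i
    _ = (∑ i ∈ range N, ((((i:ℕ):ℝ)+(K:ℝ)) ^ (1-s) - (((i+1:ℕ):ℝ)+(K:ℝ)) ^ (1-s))) / (s-1) := by
        rw [← Finset.sum_div]
    _ = ((((0:ℕ):ℝ)+(K:ℝ)) ^ (1-s) - (((N:ℕ):ℝ)+(K:ℝ)) ^ (1-s)) / (s-1) := by
        rw [Finset.sum_range_sub' (fun i => (((i:ℕ):ℝ)+(K:ℝ)) ^ (1-s))]
    _ ≤ (K:ℝ) ^ (1-s) / (s-1) := by
        have h0 : (0:ℝ) ≤ (((N:ℕ):ℝ)+(K:ℝ)) ^ (1-s) := by positivity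
        have : (((0:ℕ):ℝ)+(K:ℝ)) ^ (1-s) = (K:ℝ) ^ (1-s) := by norm_num
        rw [this]
        gcongr
        linarith

noncomputable def mfun (α b z : ℝ) (n : ℕ) : ℝ :=
  ((n:ℝ)+1) ^ (-b) / (1 + z * ((n:ℝ)+1) ^ (-α)) ^ 2

set_option maxHeartbeats 1000000 in
lemma master_bounds (α b : ℝ) (hα : 0 < α) (hb : 1 < b) (hbe : 2*α - b ≠ -1) :
    ∃ c C : ℝ, 0 < c ∧ 0 < C ∧ ∀ z : ℝ, 1 ≤ z →
      c * (z ^ (-2:ℝ) + z ^ ((1-b)/α)) ≤ (∑' n : ℕ, mfun α b z n) ∧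
      (∑' n : ℕ, mfun α b z n) ≤ C * (z ^ (-2:ℝ) + z ^ ((1-b)/α)) := by
  have hb1 : (0:ℝ) < b - 1 := by linarith
  set E : ℝ := 2*α - b with hE
  -- head constant
  obtain ⟨CH, hCH, hCHbound⟩ :
      ∃ CH : ℝ, 0 < CH ∧ ∀ z : ℝ, 1 ≤ z → ∀ K : ℕ, 1 ≤ K → (K:ℝ) ≤ 2 * z ^ α⁻¹ →
        z ^ (-2:ℝ) * ∑ n ∈ range K, ((n:ℝ)+1) ^ E ≤
          CH * (z ^ (-2:ℝ) + z ^ ((1-b)/α)) := by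
    rcases lt_or_gt_of_ne hbe with hlt | hgt
    · have hZnn0 : (0:ℝ) ≤ ∑' n : ℕ, ((n:ℝ)+1) ^ E := tsum_nonneg fun i => by positivity
      refine ⟨(∑' n : ℕ, ((n:ℝ)+1) ^ E) + 1, by linarith, fun z hz K hK1 hK2 => ?_⟩
      have hz0 : (0:ℝ) < z := by linarith
      have hZ : ∑ n ∈ range K, ((n:ℝ)+1) ^ E ≤ ∑' n : ℕ, ((n:ℝ)+1) ^ E :=
        Summable.sum_le_tsum _ (fun i _ => by positivity) (summable_shift hlt)
      have h2 : (0:ℝ) < z ^ (-2:ℝ) := rpow_pos_of_pos hz0 _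
      have h3 : (0:ℝ) ≤ z ^ ((1-b)/α) := (rpow_pos_of_pos hz0 _).le
      nlinarith [mul_le_mul_of_nonneg_left hZ h2.le]
    · have hq : (0:ℝ) < E + 1 := by linarith
      refine ⟨(1 + 1/(E+1)) * (2:ℝ) ^ (E+1), by positivity, fun z hz K hK1 hK2 => ?_⟩
      have hz0 : (0:ℝ) < z := by linarith
      have hy0 : (0:ℝ) < z ^ α⁻¹ := rpow_pos_of_pos hz0 _
      have hKnn : (0:ℝ) ≤ (K:ℝ) := Nat.cast_nonneg K
      have h1 : ∑ n ∈ range K, ((n:ℝ)+1) ^ E ≤ (1 + 1/(E+1)) * (K:ℝ) ^ (E+1) :=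
        head_sum_le hgt K
      have h2 : (K:ℝ) ^ (E+1) ≤ (2 * z ^ α⁻¹) ^ (E+1) :=
        rpow_le_rpow hKnn hK2 hq.le
      have h3 : (2 * z ^ α⁻¹) ^ (E+1) = (2:ℝ) ^ (E+1) * (z ^ α⁻¹) ^ (E+1) :=
        mul_rpow (by norm_num) hy0.le
      have h4 : z ^ (-2:ℝ) * (z ^ α⁻¹) ^ (E+1) = z ^ ((1-b)/α) := by
        rw [← Real.rpow_mul hz0.le, ← Real.rpow_add hz0]
        congr 1
        rw [hE]
        field_simp
        ring
      have hpos2 : (0:ℝ) < z ^ (-2:ℝ) := rpow_pos_of_pos hz0 _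
      have hc1 : (0:ℝ) ≤ 1 + 1/(E+1) := by positivity
      calc z ^ (-2:ℝ) * ∑ n ∈ range K, ((n:ℝ)+1) ^ E
          ≤ z ^ (-2:ℝ) * ((1 + 1/(E+1)) * (2:ℝ) ^ (E+1) * (z ^ α⁻¹) ^ (E+1)) := by
            refine mul_le_mul_of_nonneg_left ?_ hpos2.le
            calc ∑ n ∈ range K, ((n:ℝ)+1) ^ E ≤ (1 + 1/(E+1)) * (K:ℝ) ^ (E+1) := h1
              _ ≤ (1 + 1/(E+1)) * ((2:ℝ) ^ (E+1) * (z ^ α⁻¹) ^ (E+1)) := by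
                  rw [← h3]; exact mul_le_mul_of_nonneg_left h2 hc1
              _ = (1 + 1/(E+1)) * (2:ℝ) ^ (E+1) * (z ^ α⁻¹) ^ (E+1) := by ring
        _ = (1 + 1/(E+1)) * (2:ℝ) ^ (E+1) * (z ^ (-2:ℝ) * (z ^ α⁻¹) ^ (E+1)) := by ring
        _ = (1 + 1/(E+1)) * (2:ℝ) ^ (E+1) * z ^ ((1-b)/α) := by rw [h4]
        _ ≤ (1 + 1/(E+1)) * (2:ℝ) ^ (E+1) * (z ^ (-2:ℝ) + z ^ ((1-b)/α)) := by
            refine mul_le_mul_of_nonneg_left ?_ (by positivity)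
            nlinarith [hpos2]
  -- main
  have hcB : (0:ℝ) < (4:ℝ)^(1-b)/8 := by positivity
  refine ⟨min (4:ℝ)⁻¹ ((4:ℝ)^(1-b)/8) / 2, CH + 1/(b-1), by positivity,
    by positivity, fun z hz => ?_⟩
  have hz0 : (0:ℝ) < z := by linarith
  have hm0 : ∀ n : ℕ, (0:ℝ) < (n:ℝ)+1 := fun n => by positivity
  have hden : ∀ n : ℕ, (1:ℝ) ≤ 1 + z * ((n:ℝ)+1) ^ (-α) := fun n => by
    have h1 := rpow_pos_of_pos (hm0 n) (-α)
    nlinarith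
  have hdenpos : ∀ n : ℕ, (0:ℝ) < (1 + z * ((n:ℝ)+1) ^ (-α)) ^ 2 := fun n => by
    nlinarith [hden n]
  have fnn : ∀ n : ℕ, 0 ≤ mfun α b z n := fun n =>
    div_nonneg (rpow_pos_of_pos (hm0 n) _).le (hdenpos n).le
  have fle : ∀ n : ℕ, mfun α b z n ≤ ((n:ℝ)+1) ^ (-b) := fun n => by
    have h1 : (1:ℝ) ≤ (1 + z * ((n:ℝ)+1) ^ (-α)) ^ 2 := by nlinarith [hden n]
    exact div_le_self (rpow_pos_of_pos (hm0 n) _).le h1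
  have hsum : Summable (mfun α b z) :=
    Summable.of_nonneg_of_le fnn fle (summable_shift (by linarith))
  set y : ℝ := z ^ α⁻¹ with hy
  have hy1 : (1:ℝ) ≤ y := by
    rw [hy]
    calc (1:ℝ) = 1 ^ α⁻¹ := (one_rpow _).symm
      _ ≤ z ^ α⁻¹ := rpow_le_rpow zero_le_one hz (by positivity)
  have hy0 : (0:ℝ) < y := by linarith
  set K : ℕ := ⌈y⌉₊ with hK
  have hKy : y ≤ (K:ℝ) := Nat.le_ceil y
  have hKR1 : (1:ℝ) ≤ (K:ℝ) := le_trans hy1 hKy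
  have hK1 : 1 ≤ K := by exact_mod_cast hKR1
  have hKle : (K:ℝ) ≤ 2*y := by
    have := Nat.ceil_lt_add_one hy0.le
    have h2 : ((⌈y⌉₊ : ℕ):ℝ) < y + 1 := this
    rw [hK]; linarith
  have hyα : y ^ α = z := by
    rw [hy, ← Real.rpow_mul hz0.le, inv_mul_cancel₀ hα.ne', rpow_one]
  have hKz : z ≤ (K:ℝ)^α := by
    rw [← hyα]; exact rpow_le_rpow hy0.le hKy hα.le
  have hu0 : (0:ℝ) < z ^ (-2:ℝ) := rpow_pos_of_pos hz0 _
  have hv0 : (0:ℝ) < z ^ ((1-b)/α) := rpow_pos_of_pos hz0 _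
  have hyv : y ^ (1-b) = z ^ ((1-b)/α) := by
    rw [hy, ← Real.rpow_mul hz0.le]
    congr 1
    field_simp
  constructor
  · -- LOWER BOUND
    have hA : (4:ℝ)⁻¹ * z ^ (-2:ℝ) ≤ ∑' n, mfun α b z n := by
      have hf0 : mfun α b z 0 = 1 / (1+z)^2 := by
        simp [mfun, Real.one_rpow]
      have hz2 : z ^ (-2:ℝ) = 1/(z^2) := by
        rw [Real.rpow_neg hz0.le, show (2:ℝ) = ((2:ℕ):ℝ) by norm_num,
          Real.rpow_natCast, one_div]
      have h12 : (1+z)^2 ≤ 4*z^2 := by nlinarith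
      have h1 : (4:ℝ)⁻¹ * z ^ (-2:ℝ) ≤ mfun α b z 0 := by
        rw [hf0, hz2, show (4:ℝ)⁻¹ * (1/z^2) = 1/(4*z^2) by ring]
        exact one_div_le_one_div_of_le (by positivity) h12
      exact le_trans h1 (Summable.le_tsum hsum 0 fun i _ => fnn i)
    have hB : (4:ℝ)^(1-b)/8 * z ^ ((1-b)/α) ≤ ∑' n, mfun α b z n := by
      have hsub : ∑ n ∈ Ico K (2*K), mfun α b z n ≤ ∑' n, mfun α b z n :=
        Summable.sum_le_tsum _ (fun i _ => fnn i) hsum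
      have h2K : (0:ℝ) < 2*(K:ℝ) := by linarith
      have hterm : ∀ n ∈ Ico K (2*K), (2*(K:ℝ))^(-b)/4 ≤ mfun α b z n := by
        intro n hn
        obtain ⟨hn1, hn2⟩ := Finset.mem_Ico.mp hn
        have hm : (K:ℝ) ≤ (n:ℝ) := by exact_mod_cast hn1
        have hm2 : (n:ℝ)+1 ≤ 2*(K:ℝ) := by
          have : n+1 ≤ 2*K := hn2
          exact_mod_cast this
        have hmpos : (0:ℝ) < (n:ℝ)+1 := hm0 n
        have hma : z ≤ ((n:ℝ)+1)^α :=
          le_trans hKz (rpow_le_rpow (by positivity) (by linarith) hα.le)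
        have hden2 : z * ((n:ℝ)+1)^(-α) ≤ 1 := by
          rw [Real.rpow_neg hmpos.le, ← div_eq_mul_inv,
            div_le_one (rpow_pos_of_pos hmpos α)]
          exact hma
        have hdnn : (0:ℝ) ≤ z * ((n:ℝ)+1)^(-α) :=
          mul_nonneg hz0.le (rpow_pos_of_pos hmpos _).le
        have hdle : (1 + z*((n:ℝ)+1)^(-α))^2 ≤ 4 := by nlinarith
        have hnum : (2*(K:ℝ))^(-b) ≤ ((n:ℝ)+1)^(-b) :=
          rpow_le_rpow_of_nonpos hmpos hm2 (by linarith)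
        calc (2*(K:ℝ))^(-b)/4 ≤ ((n:ℝ)+1)^(-b)/4 := by gcongr
          _ ≤ mfun α b z n := by
              exact div_le_div_of_nonneg_left (rpow_pos_of_pos hmpos _).le
                (hdenpos n) hdle
      have hcard : (K:ℝ) * ((2*(K:ℝ))^(-b)/4) ≤ ∑ n ∈ Ico K (2*K), mfun α b z n := by
        have := Finset.sum_le_sum hterm
        rwa [Finset.sum_const, Nat.card_Ico, show 2*K - K = K by omega,
          nsmul_eq_mul] at this
      have hKb : (K:ℝ) * ((2*(K:ℝ))^(-b)/4) = (2*(K:ℝ))^(1-b)/8 := by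
        have e1 : (2*(K:ℝ))^(1-b) = (2*(K:ℝ))^(1:ℝ) * (2*(K:ℝ))^(-b) := by
          rw [← Real.rpow_add h2K]; congr 1; try ring
        rw [e1, Real.rpow_one]; ring
      have h4y : (2*(K:ℝ)) ≤ 4*y := by linarith
      have hlow : (4:ℝ)^(1-b) * y^(1-b) ≤ (2*(K:ℝ))^(1-b) := by
        have := rpow_le_rpow_of_nonpos h2K h4y (by linarith : 1-b ≤ 0)
        rwa [mul_rpow (by norm_num) hy0.le] at this
      calc (4:ℝ)^(1-b)/8 * z ^ ((1-b)/α) = (4:ℝ)^(1-b) * y^(1-b) / 8 := by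
            rw [← hyv]; ring
        _ ≤ (2*(K:ℝ))^(1-b)/8 := by linarith
        _ = (K:ℝ) * ((2*(K:ℝ))^(-b)/4) := hKb.symm
        _ ≤ ∑ n ∈ Ico K (2*K), mfun α b z n := hcard
        _ ≤ ∑' n, mfun α b z n := hsub
    have hmin1 : min (4:ℝ)⁻¹ ((4:ℝ)^(1-b)/8) ≤ (4:ℝ)⁻¹ := min_le_left _ _
    have hmin2 : min (4:ℝ)⁻¹ ((4:ℝ)^(1-b)/8) ≤ (4:ℝ)^(1-b)/8 := min_le_right _ _
    have h1 : min (4:ℝ)⁻¹ ((4:ℝ)^(1-b)/8) * z ^ (-2:ℝ) ≤ (4:ℝ)⁻¹ * z ^ (-2:ℝ) :=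
      mul_le_mul_of_nonneg_right hmin1 hu0.le
    have h2 : min (4:ℝ)⁻¹ ((4:ℝ)^(1-b)/8) * z ^ ((1-b)/α) ≤ (4:ℝ)^(1-b)/8 * z ^ ((1-b)/α) :=
      mul_le_mul_of_nonneg_right hmin2 hv0.le
    calc min (4:ℝ)⁻¹ ((4:ℝ)^(1-b)/8) / 2 * (z ^ (-2:ℝ) + z ^ ((1-b)/α))
        = (min (4:ℝ)⁻¹ ((4:ℝ)^(1-b)/8) * z ^ (-2:ℝ)
          + min (4:ℝ)⁻¹ ((4:ℝ)^(1-b)/8) * z ^ ((1-b)/α)) / 2 := by ring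
      _ ≤ ((4:ℝ)⁻¹ * z ^ (-2:ℝ) + (4:ℝ)^(1-b)/8 * z ^ ((1-b)/α)) / 2 := by linarith
      _ ≤ ((∑' n, mfun α b z n) + (∑' n, mfun α b z n)) / 2 := by linarith
      _ = ∑' n, mfun α b z n := by ring
  · -- UPPER BOUND
    have hsplit : ∑ n ∈ range K, mfun α b z n + ∑' i, mfun α b z (i+K) = ∑' n, mfun α b z n :=
      Summable.sum_add_tsum_nat_add K hsum
    have hhead : ∑ n ∈ range K, mfun α b z n ≤ z ^ (-2:ℝ) * ∑ n ∈ range K, ((n:ℝ)+1) ^ E := by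
      rw [Finset.mul_sum]
      refine Finset.sum_le_sum fun n _ => ?_
      have hmpos := hm0 n
      have hrp : (0:ℝ) < z * ((n:ℝ)+1)^(-α) := mul_pos hz0 (rpow_pos_of_pos hmpos _)
      have hsq : (z * ((n:ℝ)+1)^(-α))^2 ≤ (1 + z*((n:ℝ)+1)^(-α))^2 :=
        pow_le_pow_left₀ hrp.le (by linarith) 2
      have hstep : mfun α b z n ≤ ((n:ℝ)+1)^(-b) / (z * ((n:ℝ)+1)^(-α))^2 :=
        div_le_div_of_nonneg_left (rpow_pos_of_pos hmpos _).le (pow_pos hrp 2) hsq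
      have hkey : ((n:ℝ)+1)^(-b) / (z * ((n:ℝ)+1)^(-α))^2 = z ^ (-2:ℝ) * ((n:ℝ)+1) ^ E := by
        rw [div_eq_iff (pow_pos hrp 2).ne']
        have e1 : (((n:ℝ)+1)^(-α))^2 = ((n:ℝ)+1)^(-α) * ((n:ℝ)+1)^(-α) := sq _
        have e3 : z^(-2:ℝ) * z^2 = 1 := by
          rw [← Real.rpow_natCast z 2, ← Real.rpow_add hz0]; norm_num
        have e4 : ((n:ℝ)+1)^E * (((n:ℝ)+1)^(-α) * ((n:ℝ)+1)^(-α)) = ((n:ℝ)+1)^(-b) := by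
          rw [← Real.rpow_add hmpos, ← Real.rpow_add hmpos]
          congr 1
          rw [hE]; ring
        calc ((n:ℝ)+1)^(-b) = (z^(-2:ℝ) * z^2) *
              (((n:ℝ)+1)^E * (((n:ℝ)+1)^(-α) * ((n:ℝ)+1)^(-α))) := by rw [e3, e4]; ring
          _ = z ^ (-2:ℝ) * ((n:ℝ)+1) ^ E * (z * ((n:ℝ)+1)^(-α))^2 := by
              rw [mul_pow, e1]; ring
      exact hstep.trans_eq hkey
    have htail : ∑' i, mfun α b z (i+K) ≤ z ^ ((1-b)/α) / (b-1) := by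
      have hs2 : Summable (fun i : ℕ => ((i:ℝ)+(K:ℝ)+1)^(-b)) := by
        have h0 := (summable_nat_add_iff (f := fun n : ℕ => ((n:ℝ)+1)^(-b)) K).mpr
          (summable_shift (by linarith))
        refine h0.congr fun i => ?_
        push_cast
        ring_nf
      have hs1 : Summable (fun i : ℕ => mfun α b z (i+K)) :=
        (summable_nat_add_iff K).mpr hsum
      have hpt : ∀ i : ℕ, mfun α b z (i+K) ≤ ((i:ℝ)+(K:ℝ)+1)^(-b) := by
        intro i
        refine (fle (i+K)).trans_eq ?_
        push_cast
        ring_nf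
      have h1 : ∑' i, mfun α b z (i+K) ≤ ∑' i : ℕ, ((i:ℝ)+(K:ℝ)+1)^(-b) :=
        Summable.tsum_le_tsum hpt hs1 hs2
      have h2 := tail_sum_le hb K hK1
      have h3 : (K:ℝ)^(1-b) ≤ z ^ ((1-b)/α) := by
        rw [← hyv]
        exact rpow_le_rpow_of_nonpos hy0 hKy (by linarith)
      have h4 : (K:ℝ)^(1-b)/(b-1) ≤ z ^ ((1-b)/α)/(b-1) := by gcongr
      linarith
    have hCHb := hCHbound z hz K hK1 (by rw [← hy]; exact hKle)
    have htot : ∑' n, mfun α b z n ≤ CH * (z ^ (-2:ℝ) + z ^ ((1-b)/α)) + z ^ ((1-b)/α)/(b-1) := by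
      rw [← hsplit]
      have := hhead.trans hCHb
      linarith
    have hfin : z ^ ((1-b)/α)/(b-1) ≤ (1/(b-1)) * (z ^ (-2:ℝ) + z ^ ((1-b)/α)) := by
      rw [div_eq_mul_one_div, mul_comm]
      refine mul_le_mul_of_nonneg_left ?_ (by positivity)
      linarith
    calc ∑' n, mfun α b z n ≤ CH * (z ^ (-2:ℝ) + z ^ ((1-b)/α)) + z ^ ((1-b)/α)/(b-1) := htot
      _ ≤ CH * (z ^ (-2:ℝ) + z ^ ((1-b)/α)) + (1/(b-1)) * (z ^ (-2:ℝ) + z ^ ((1-b)/α)) := by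
          linarith
      _ = (CH + 1/(b-1)) * (z ^ (-2:ℝ) + z ^ ((1-b)/α)) := by ring

lemma tsum_pnat_eq (f : ℝ → ℝ) :
    ∑' k : ℕ+, f (k:ℝ) = ∑' n : ℕ, f ((n:ℝ)+1) := by
  rw [← Equiv.pnatEquivNat.symm.tsum_eq (f := fun k : ℕ+ => f (k:ℝ))]
  apply tsum_congr
  intro n
  congr 1
  show ((Equiv.pnatEquivNat.symm n : ℕ+) : ℝ) = (n:ℝ)+1
  have h : ((Equiv.pnatEquivNat.symm n : ℕ+) : ℕ) = n + 1 := rfl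
  rw [show ((Equiv.pnatEquivNat.symm n : ℕ+) : ℝ) = (((Equiv.pnatEquivNat.symm n : ℕ+) : ℕ) : ℝ) from rfl, h]
  push_cast
  ring


end Helpers

/-- Sample-variance sum `N₁(n) = ∑_{k≥1} k^{-1-2rα}/(1+n^ℓ k^{-α})²`. -/
noncomputable def sampleVarReg (α r ℓ n : ℝ) : ℝ :=
  ∑' k : ℕ+, (k : ℝ) ^ (-1 - 2 * r * α) / (1 + n ^ ℓ * (k : ℝ) ^ (-α)) ^ 2

/-- Noise-variance sum `N₂(n) = n^{2ℓ-1} ∑_{k≥1} k^{-2α}/(1+n^ℓ k^{-α})²`. -/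
noncomputable def noiseVarReg (α ℓ n : ℝ) : ℝ :=
  n ^ (2 * ℓ - 1) * ∑' k : ℕ+, (k : ℝ) ^ (-2 * α) / (1 + n ^ ℓ * (k : ℝ) ^ (-α)) ^ 2

/-- Closed-form excess error `ε(n) = (N₁(n) + σ²N₂(n))/(1 − N₂(n))` in the effectively
regularized regime. -/
noncomputable def excessErrReg (α r ℓ σ n : ℝ) : ℝ :=
  (sampleVarReg α r ℓ n + σ ^ 2 * noiseVarReg α ℓ n) / (1 - noiseVarReg α ℓ n)

set_option maxHeartbeats 1000000 in
/-- In the effectively regularized regime (0 < ℓ < α), the closed-form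
excess error is `Θ(n^{-2ℓ·min(r,1)} + σ²·n^{(ℓ-α)/α})` as n → ∞. -/
theorem excess_error_rate_regularized_regime (α r ℓ σ : ℝ)
    (hα : 1 < α) (hr : 0 < r) (hr1 : r ≠ 1) (hℓ0 : 0 < ℓ) (hℓα : ℓ < α) (hσ : 0 ≤ σ) :
    ∃ c C n₀ : ℝ, 0 < c ∧ c ≤ C ∧ 1 < n₀ ∧ ∀ n : ℝ, n₀ ≤ n →
      c * (n ^ (-2 * ℓ * min r 1) + σ ^ 2 * n ^ ((ℓ - α) / α)) ≤ excessErrReg α r ℓ σ n ∧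
      excessErrReg α r ℓ σ n ≤ C * (n ^ (-2 * ℓ * min r 1) + σ ^ 2 * n ^ ((ℓ - α) / α)) := by
  have hα0 : (0:ℝ) < α := by linarith
  have hrα : (0:ℝ) < r * α := mul_pos hr hα0
  obtain ⟨c₁, C₁, hc₁, hC₁, hbound₁⟩ := master_bounds α (1+2*r*α) hα0 (by linarith)
    (by intro h; apply hr1; have h2 : 2*α*(1-r) = 0 := by linarith
        rcases mul_eq_zero.mp h2 with h3 | h3
        · linarith
        · linarith)
  obtain ⟨c₂, C₂, hc₂, hC₂, hbound₂⟩ := master_bounds α (2*α) hα0 (by linarith)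
    (by intro h; linarith)
  have hαℓ : (0:ℝ) < α - ℓ := by linarith
  set M : ℝ := (4*C₂+1) ^ (α/(α-ℓ)) with hM
  have hM1 : (1:ℝ) ≤ M := by
    rw [hM]
    apply Real.one_le_rpow (by linarith) (by positivity)
  refine ⟨min (min c₁ c₂) (4 * max C₁ C₂), 4 * max C₁ C₂, max 2 M,
    lt_min (lt_min hc₁ hc₂) (by positivity), min_le_right _ _,
    lt_of_lt_of_le one_lt_two (le_max_left _ _), fun n hn => ?_⟩
  have hn2 : (2:ℝ) ≤ n := le_trans (le_max_left _ _) hn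
  have hnM : M ≤ n := le_trans (le_max_right _ _) hn
  have hn1 : (1:ℝ) < n := by linarith
  have hn0 : (0:ℝ) < n := by linarith
  set z : ℝ := n ^ ℓ with hz
  have hz1 : (1:ℝ) ≤ z := by
    rw [hz]; exact Real.one_le_rpow hn1.le hℓ0.le
  have hz0 : (0:ℝ) < z := by linarith
  -- power identities
  have hzp : ∀ t : ℝ, z ^ t = n ^ (ℓ*t) := fun t => by
    rw [hz, ← Real.rpow_mul hn0.le]
  have hna : ∀ a t : ℝ, n ^ a * n ^ t = n ^ (a+t) := fun a t =>
    (Real.rpow_add hn0 a t).symm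
  -- conversions
  have e₁ : sampleVarReg α r ℓ n = ∑' m : ℕ, mfun α (1+2*r*α) z m := by
    rw [sampleVarReg, hz]
    simp only [show -1 - 2*r*α = -(1+2*r*α) from by ring]
    exact tsum_pnat_eq (fun x => x^(-(1+2*r*α))/(1+n^ℓ*x^(-α))^2)
  have e₂ : noiseVarReg α ℓ n = n ^ (2*ℓ-1) * ∑' m : ℕ, mfun α (2*α) z m := by
    rw [noiseVarReg, hz]
    congr 1
    simp only [show (-2) * α = -(2*α) from by ring]
    exact tsum_pnat_eq (fun x => x^(-(2*α))/(1+n^ℓ*x^(-α))^2)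
  obtain ⟨hlow₁, hup₁⟩ := hbound₁ z hz1
  obtain ⟨hlow₂, hup₂⟩ := hbound₂ z hz1
  -- rewrite the z-powers as n-powers
  have ezu : z ^ (-2:ℝ) = n ^ (-2*ℓ) := by rw [hzp]; congr 1; ring
  have ezv₁ : z ^ ((1-(1+2*r*α))/α) = n ^ (-2*ℓ*r) := by
    rw [hzp]; congr 1; field_simp; ring
  have ezv₂ : z ^ ((1-2*α)/α) = n ^ (ℓ/α - 2*ℓ) := by
    rw [hzp]; congr 1; field_simp
  set w : ℝ := n ^ (-2*ℓ*min r 1) with hw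
  set g : ℝ := n ^ ((ℓ-α)/α) with hg
  have hw0 : 0 < w := rpow_pos_of_pos hn0 _
  have hg0 : 0 < g := rpow_pos_of_pos hn0 _
  -- sample bounds in terms of w
  have hexp : 2*ℓ*r ≤ 2*ℓ*1 ∨ 2*ℓ*1 ≤ 2*ℓ*r := by
    rcases le_total r 1 with h | h
    · exact Or.inl (mul_le_mul_of_nonneg_left h (by linarith))
    · exact Or.inr (mul_le_mul_of_nonneg_left h (by linarith))
  have hwsum : w ≤ n ^ (-2*ℓ) + n ^ (-2*ℓ*r) ∧ n ^ (-2*ℓ) + n ^ (-2*ℓ*r) ≤ 2*w := by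
    rcases le_total r 1 with hrle | hrge
    · have hmin : min r 1 = r := min_eq_left hrle
      have hee : 2*ℓ*r ≤ 2*ℓ*1 := mul_le_mul_of_nonneg_left hrle (by linarith)
      have h1 : n ^ (-2*ℓ) ≤ n ^ (-2*ℓ*r) := by
        apply Real.rpow_le_rpow_of_exponent_le hn1.le
        linarith only [hee]
      have h2 := (rpow_pos_of_pos hn0 (-2*ℓ)).le
      rw [hw, hmin]
      constructor
      · linarith only [h2]
      · linarith only [h1]
    · have hmin : min r 1 = 1 := min_eq_right hrge
      have hee : 2*ℓ*1 ≤ 2*ℓ*r := mul_le_mul_of_nonneg_left hrge (by linarith)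
      have h1 : n ^ (-2*ℓ*r) ≤ n ^ (-2*ℓ) := by
        apply Real.rpow_le_rpow_of_exponent_le hn1.le
        linarith only [hee]
      have h2 := (rpow_pos_of_pos hn0 (-2*ℓ*r)).le
      have e : n ^ ((-2)*ℓ*1) = n ^ ((-2)*ℓ) := by congr 1; ring
      rw [hw, hmin, e]
      constructor
      · linarith only [h2]
      · linarith only [h1]
  have hN₁low : c₁ * w ≤ sampleVarReg α r ℓ n := by
    rw [e₁]
    refine le_trans ?_ hlow₁
    rw [ezu, ezv₁]
    exact mul_le_mul_of_nonneg_left hwsum.1 hc₁.le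
  have hN₁up : sampleVarReg α r ℓ n ≤ 2*C₁ * w := by
    rw [e₁]
    refine le_trans hup₁ ?_
    rw [ezu, ezv₁]
    calc C₁ * (n ^ (-2*ℓ) + n ^ (-2*ℓ*r)) ≤ C₁ * (2*w) :=
          mul_le_mul_of_nonneg_left hwsum.2 hC₁.le
      _ = 2*C₁*w := by ring
  -- noise bounds in terms of g
  have hgn : n ^ (2*ℓ-1) * n ^ (ℓ/α - 2*ℓ) = g := by
    rw [hna, hg]; congr 1; field_simp; ring
  have hginv : n ^ (2*ℓ-1) * n ^ (-2*ℓ) = n ^ (-1:ℝ) := by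
    rw [hna]; congr 1; ring
  have hn1g : n ^ (-1:ℝ) ≤ g := by
    rw [hg]
    apply Real.rpow_le_rpow_of_exponent_le hn1.le
    rw [show (-1:ℝ) = (-α)/α from by field_simp, div_le_div_iff₀ hα0 hα0]
    nlinarith [hℓ0.le, hα0]
  have hp2ℓ : (0:ℝ) < n ^ (2*ℓ-1) := rpow_pos_of_pos hn0 _
  have hN₂low : c₂ * g ≤ noiseVarReg α ℓ n := by
    rw [e₂]
    have h1 := mul_le_mul_of_nonneg_left hlow₂ hp2ℓ.le
    have h2 : n ^ (2*ℓ-1) * (c₂ * (z ^ (-2:ℝ) + z ^ ((1-2*α)/α))) ≥ c₂ * g := by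
      rw [ezu, ezv₂]
      have hu' : 0 < n ^ (2*ℓ-1) * n ^ (-2*ℓ) := by positivity
      calc n ^ (2*ℓ-1) * (c₂ * (n ^ (-2*ℓ) + n ^ (ℓ/α - 2*ℓ)))
          = c₂ * (n ^ (2*ℓ-1) * n ^ (-2*ℓ)) + c₂ * (n ^ (2*ℓ-1) * n ^ (ℓ/α-2*ℓ)) := by ring
        _ ≥ c₂ * (n ^ (2*ℓ-1) * n ^ (ℓ/α-2*ℓ)) := by
            have h3 := mul_pos hc₂ hu'
            linarith only [h3]
        _ = c₂ * g := by rw [hgn]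
    linarith
  have hN₂up : noiseVarReg α ℓ n ≤ 2*C₂ * g := by
    rw [e₂]
    have h1 := mul_le_mul_of_nonneg_left hup₂ hp2ℓ.le
    have h2 : n ^ (2*ℓ-1) * (C₂ * (z ^ (-2:ℝ) + z ^ ((1-2*α)/α))) ≤ 2*C₂*g := by
      rw [ezu, ezv₂]
      calc n ^ (2*ℓ-1) * (C₂ * (n ^ (-2*ℓ) + n ^ (ℓ/α - 2*ℓ)))
          = C₂ * (n ^ (2*ℓ-1) * n ^ (-2*ℓ)) + C₂ * (n ^ (2*ℓ-1) * n ^ (ℓ/α-2*ℓ)) := by ring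
        _ = C₂ * (n ^ (-1:ℝ)) + C₂ * g := by rw [hginv, hgn]
        _ ≤ 2*C₂*g := by
            have h3 := mul_le_mul_of_nonneg_left hn1g hC₂.le
            linarith only [h3]
    linarith only [h1, h2]
  have hN₂0 : 0 ≤ noiseVarReg α ℓ n := le_trans (by positivity) hN₂low
  -- N₂ ≤ 1/2
  have hghalf : g ≤ 1/(4*C₂+1) := by
    have hMn : (4*C₂+1) ≤ n ^ ((α-ℓ)/α) := by
      calc (4*C₂+1) = M ^ ((α-ℓ)/α) := by
            rw [hM, ← Real.rpow_mul (by linarith)]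
            rw [show α/(α-ℓ) * ((α-ℓ)/α) = 1 from by field_simp]
            rw [Real.rpow_one]
        _ ≤ n ^ ((α-ℓ)/α) := Real.rpow_le_rpow (by linarith) hnM (by positivity)
    have he : g = (n ^ ((α-ℓ)/α))⁻¹ := by
      rw [hg, ← Real.rpow_neg hn0.le]
      congr 1; field_simp; ring
    rw [he, inv_eq_one_div]
    apply one_div_le_one_div_of_le (by linarith) hMn
  have hN₂half : noiseVarReg α ℓ n ≤ 1/2 := by
    have h1 : 2*C₂*g ≤ 2*C₂/(4*C₂+1) := by
      rw [div_eq_mul_one_div]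
      exact mul_le_mul_of_nonneg_left hghalf (by positivity)
    have h2 : 2*C₂/(4*C₂+1) ≤ 1/2 := by
      rw [div_le_div_iff₀ (by positivity) (by norm_num)]
      linarith
    linarith
  -- assemble
  set X : ℝ := sampleVarReg α r ℓ n + σ^2 * noiseVarReg α ℓ n with hX
  have hXnn : 0 ≤ X := by
    have : 0 ≤ sampleVarReg α r ℓ n := le_trans (by positivity) hN₁low
    positivity
  have hD1 : 1 - noiseVarReg α ℓ n ≤ 1 := by linarith
  have hDhalf : 1/2 ≤ 1 - noiseVarReg α ℓ n := by linarith
  have hD0 : 0 < 1 - noiseVarReg α ℓ n := by linarith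
  have hεlow : X ≤ excessErrReg α r ℓ σ n := by
    rw [excessErrReg, ← hX]
    calc X = X / 1 := (div_one X).symm
      _ ≤ X / (1 - noiseVarReg α ℓ n) := div_le_div_of_nonneg_left hXnn hD0 hD1
  have hεup : excessErrReg α r ℓ σ n ≤ 2 * X := by
    rw [excessErrReg, ← hX]
    calc X / (1 - noiseVarReg α ℓ n) ≤ X / (1/2) :=
          div_le_div_of_nonneg_left hXnn (by norm_num) hDhalf
      _ = 2 * X := by ring
  constructor
  · -- lower
    have h1 : min (min c₁ c₂) (4 * max C₁ C₂) * (w + σ^2 * g) ≤ X := by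
      have ha : min (min c₁ c₂) (4 * max C₁ C₂) ≤ c₁ :=
        le_trans (min_le_left _ _) (min_le_left _ _)
      have hb : min (min c₁ c₂) (4 * max C₁ C₂) ≤ c₂ :=
        le_trans (min_le_left _ _) (min_le_right _ _)
      have h2 : σ^2 * (c₂ * g) ≤ σ^2 * noiseVarReg α ℓ n :=
        mul_le_mul_of_nonneg_left hN₂low (by positivity)
      have h3 : min (min c₁ c₂) (4 * max C₁ C₂) * w ≤ c₁ * w :=
        mul_le_mul_of_nonneg_right ha hw0.le
      have h4 : min (min c₁ c₂) (4 * max C₁ C₂) * (σ^2*g) ≤ c₂ * (σ^2*g) :=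
        mul_le_mul_of_nonneg_right hb (by positivity)
      calc min (min c₁ c₂) (4 * max C₁ C₂) * (w + σ^2 * g)
          = min (min c₁ c₂) (4 * max C₁ C₂) * w
            + min (min c₁ c₂) (4 * max C₁ C₂) * (σ^2*g) := by ring
        _ ≤ c₁ * w + c₂ * (σ^2*g) := by linarith only [h3, h4]
        _ = c₁ * w + σ^2 * (c₂ * g) := by ring
        _ ≤ X := by rw [hX]; linarith only [hN₁low, h2]
    exact le_trans h1 hεlow
  · -- upper
    have h1 : X ≤ 2*(max C₁ C₂) * (w + σ^2 * g) := by
      have ha : C₁ ≤ max C₁ C₂ := le_max_left _ _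
      have hb : C₂ ≤ max C₁ C₂ := le_max_right _ _
      have h2 : σ^2 * noiseVarReg α ℓ n ≤ σ^2 * (2*C₂*g) :=
        mul_le_mul_of_nonneg_left hN₂up (by positivity)
      have h3 : 2*C₁*w ≤ 2*(max C₁ C₂)*w :=
        mul_le_mul_of_nonneg_right (by linarith only [ha]) hw0.le
      have h4 : σ^2*(2*C₂*g) ≤ 2*(max C₁ C₂)*(σ^2*g) := by
        have := mul_le_mul_of_nonneg_right (show 2*C₂ ≤ 2*max C₁ C₂ by linarith only [hb])
          (show (0:ℝ) ≤ σ^2*g by positivity)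
        calc σ^2*(2*C₂*g) = 2*C₂*(σ^2*g) := by ring
          _ ≤ 2*max C₁ C₂*(σ^2*g) := this
          _ = 2*(max C₁ C₂)*(σ^2*g) := by ring
      calc X = sampleVarReg α r ℓ n + σ^2 * noiseVarReg α ℓ n := hX
        _ ≤ 2*C₁*w + σ^2*(2*C₂*g) := by linarith only [hN₁up, h2]
        _ ≤ 2*(max C₁ C₂)*w + 2*(max C₁ C₂)*(σ^2*g) := by linarith only [h3, h4]
        _ = 2*(max C₁ C₂) * (w + σ^2 * g) := by ring
    calc excessErrReg α r ℓ σ n ≤ 2 * X := hεup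
      _ ≤ 2 * (2*(max C₁ C₂) * (w + σ^2 * g)) := by linarith only [h1]
      _ = 4 * max C₁ C₂ * (w + σ^2*g) := by ring
end
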